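/- arXiv:1704.04425 — 4 statements merged into one kernel-verified Lean document; each statement's English description precedes it below -/
import Mathlib

section
/- For the hooklength diagram of the chopped square partition $\eta_k = (k^{k-1}, k-1)$ of $n = k^2 - 1$, the number of boxes of $\eta_k$ whose hook length does not belong to the set of principal hook lengths of $\eta_k$ equals $k^2/2$ if $k$ is even, and $(k^2+3)/2$ if $k$ is odd. -/
/-- A list of naturals is a partition if it is weakly decreasing with positive parts. -/
def IsPartition (l : List ℕ) : Prop := l.Pairwise (· ≥ ·) ∧ ∀ x ∈ l, 0 < x

/-- The `i`-th part of a partition (0-indexed), zero if out of range. -/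
def part (l : List ℕ) (i : ℕ) : ℕ := l.getD i 0

/-- The number of parts of `l` that are greater than `j`, i.e. the `j`-th column length
(0-indexed), i.e. the `j`-th part of the conjugate partition. -/
def conjPart (l : List ℕ) (j : ℕ) : ℕ := (l.filter fun p => decide (j < p)).length

/-- The conjugate partition. -/
def conjugate (l : List ℕ) : List ℕ := (List.range (part l 0)).map fun j => conjPart l j

/-- The hook length of the box in row `i`, column `j` (both 0-indexed). -/
def hookLen (l : List ℕ) (i j : ℕ) : ℕ := part l i + conjPart l j - i - j - 1

/-- The Durfee size: the side of the largest square inside the Young diagram. -/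
def durfee (l : List ℕ) : ℕ :=
  ((List.range l.length).filter fun i => decide (i < part l i)).length

/-- The principal hook partition: the list of diagonal hook lengths. -/
def hat (l : List ℕ) : List ℕ := (List.range (durfee l)).map fun i => hookLen l i i

/-- The `i`-th member of the canonical β-set (first-column hook lengths). -/
def betaEntry (l : List ℕ) (i : ℕ) : ℕ := part l i + (l.length - 1 - i)

/-- The canonical β-set of a partition, as a (strictly decreasing) list. -/
def betaSet (l : List ℕ) : List ℕ := (List.range l.length).map fun i => betaEntry l i

/-- Sort a list of naturals in weakly decreasing order. -/
def sortDesc (l : List ℕ) : List ℕ := List.insertionSort (· ≥ ·) l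

/-- The partition corresponding to a strictly decreasing β-set list `b`. -/
def partOfBeta (b : List ℕ) : List ℕ :=
  ((List.range b.length).map fun i => part b i - (b.length - 1 - i)).filter
    fun x => decide (0 < x)

/-- The partition obtained from `l` by removing the rim hook of length `r`
corresponding to the β-number `x` (replace `x` by `x - r` in the β-set). -/
def removeHook (l : List ℕ) (x r : ℕ) : List ℕ :=
  partOfBeta (sortDesc ((x - r) :: (betaSet l).erase x))

/-- The leg length of the rim hook of length `r` removed at β-number `x`:
the number of β-numbers strictly between `x - r` and `x`. -/
def legLen (b : List ℕ) (x r : ℕ) : ℕ :=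
  (b.filter fun y => decide (x - r < y ∧ y < x)).length

/-- The irreducible character value `χ^l(μ)` of the symmetric group, computed by the
Murnaghan–Nakayama rule (`l` is the indexing partition, `μ` the cycle type). -/
def chi : List ℕ → List ℕ → ℤ
  | l, [] => if l = [] then 1 else 0
  | l, r :: μ =>
      (((betaSet l).filter fun x => decide (r ≤ x ∧ (x - r) ∉ betaSet l)).map
        fun x => (-1 : ℤ) ^ legLen (betaSet l) x r * chi (removeHook l x r) μ).sum
termination_by l μ => μ.length

/-- `IsAddHook ρ r τ` : the partition `τ` is obtained from `ρ` by adding a rim hook of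
length `r` (equivalently, `ρ` is obtained from `τ` by removing a rim hook of length `r`). -/
def IsAddHook (ρ : List ℕ) (r : ℕ) (τ : List ℕ) : Prop :=
  IsPartition τ ∧ ∃ x ∈ betaSet τ, r ≤ x ∧ (x - r) ∉ betaSet τ ∧ removeHook τ x r = ρ

/-- The leg length of the rim hook `τ / ρ`: one less than its number of rows. -/
def legAdd (ρ τ : List ℕ) : ℕ :=
  ((List.range τ.length).filter fun i => decide (part ρ i < part τ i)).length - 1

/-- The canonical weakly decreasing list of parts of a `Nat.Partition`. -/
def sortedParts {n : ℕ} (p : Nat.Partition n) : List ℕ := (p.parts.sort (· ≤ ·)).reverse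

open scoped Classical in
/-- The virtual character `ψ_{ρ,n}`, evaluated at the cycle type `μ`:
the sum of `(-1)^{ℓ(S)} χ^{ρ*S}(μ)` over all rim hooks `S` of length `r` addable to `ρ`. -/
noncomputable def psi (ρ : List ℕ) (n r : ℕ) (μ : List ℕ) : ℤ :=
  ∑ τ : Nat.Partition n,
    if IsAddHook ρ r (sortedParts τ) then
      (-1 : ℤ) ^ legAdd ρ (sortedParts τ) * chi (sortedParts τ) μ
    else 0

/-- The order of the centralizer of an element of cycle type `μ` in `S_{|μ|}`:
`∏ i^{m_i} m_i!`. -/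
def zOrder (μ : List ℕ) : ℕ :=
  ∏ i ∈ Finset.Icc 1 μ.sum, i ^ μ.count i * (μ.count i).factorial

/-- The Kronecker coefficient `g(λ, μ, ν) = ⟨χ^λ, χ^μ ⊗ χ^ν⟩` for `S_n`, computed as a
sum over conjugacy classes (cycle types). -/
noncomputable def kron (n : ℕ) (lam mu nu : List ℕ) : ℚ :=
  ∑ π : Nat.Partition n,
    (chi lam (sortedParts π) * chi mu (sortedParts π) * chi nu (sortedParts π) : ℚ) /
      zOrder (sortedParts π)

/-- `τ ∈ N(ρ, 1)` : `τ` is obtained from `ρ` by removing a removable box and adding an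
addable box. -/
def InN1 (ρ τ : List ℕ) : Prop := ∃ σ, IsAddHook σ 1 ρ ∧ IsAddHook σ 1 τ

/-- The Littlewood–Richardson coefficient `c^γ_{η,δ}` (with `|η| = a`, `|δ| = b`),
computed character-theoretically. -/
noncomputable def lr (a b : ℕ) (η δ γ : List ℕ) : ℚ :=
  ∑ μ : Nat.Partition a, ∑ ν : Nat.Partition b,
    (chi η (sortedParts μ) * chi δ (sortedParts ν) *
      chi γ (sortDesc (sortedParts μ ++ sortedParts ν)) : ℚ) /
      (zOrder (sortedParts μ) * zOrder (sortedParts ν))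

lemma part_eta' (m : ℕ) (i : ℕ) :
    part (List.replicate m (m+1) ++ [m]) i = if i < m then m+1 else if i = m then m else 0 := by
  unfold part
  rcases lt_trichotomy i m with h|h|h
  · rw [List.getD_append _ _ _ _ (by simpa using h), if_pos h,
      List.getD_eq_getElem _ _ (by simpa using h)]
    simp
  · subst h
    rw [List.getD_append_right _ _ _ _ (by simp)]
    simp
  · rw [if_neg (by omega), if_neg (by omega)]
    apply List.getD_eq_default
    simp; omega

lemma conjPart_eta' (m : ℕ) (j : ℕ) :
    conjPart (List.replicate m (m+1) ++ [m]) j =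
      if j < m then m+1 else if j = m then m else 0 := by
  unfold conjPart
  rw [List.filter_append, List.filter_replicate]
  rcases lt_trichotomy j m with h|h|h
  · have h1 : decide (j < m+1) = true := decide_eq_true (by omega)
    have h2 : decide (j < m) = true := decide_eq_true h
    simp [List.filter, h1, h2]
    split_ifs <;> simp_all <;> omega
  · subst h
    have h1 : decide (j < j+1) = true := decide_eq_true (by omega)
    have h2 : decide (j < j) = false := decide_eq_false (by omega)
    simp [List.filter, h1, h2]
  · have h1 : decide (j < m+1) = false := decide_eq_false (by omega)
    have h2 : decide (j < m) = false := decide_eq_false (by omega)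
    simp [List.filter, h1, h2]
    split_ifs <;> simp_all <;> omega

lemma durfee_eta' (m : ℕ) : durfee (List.replicate m (m+1) ++ [m]) = m := by
  unfold durfee
  rw [show (List.replicate m (m+1) ++ [m]).length = m + 1 by simp]
  rw [List.filter_congr (l := List.range (m+1)) (q := fun i => decide (i < m)) ?_]
  · rw [List.range_succ, List.filter_append,
      List.filter_eq_self.mpr (fun a ha => decide_eq_true (List.mem_range.mp ha)),
      List.filter_cons]
    simp
  · intro i hi
    rw [part_eta' m i]
    rcases lt_or_ge i m with h|h
    · simp [h]; omega
    · have hik : i = m := by have := List.mem_range.mp hi; omega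
      simp [hik]

lemma mem_hat' (m : ℕ) (x : ℕ) :
    x ∈ hat (List.replicate m (m+1) ++ [m]) ↔ x % 2 = 1 ∧ 3 ≤ x ∧ x ≤ 2*m+1 := by
  unfold hat
  rw [durfee_eta' m]
  simp only [List.mem_map, List.mem_range]
  constructor
  · rintro ⟨i, hi, rfl⟩
    unfold hookLen
    rw [part_eta' m i, conjPart_eta' m i, if_pos hi]
    omega
  · rintro ⟨h1, h2, h3⟩
    refine ⟨(2*m+1-x)/2, by omega, ?_⟩
    unfold hookLen
    rw [part_eta' m, conjPart_eta' m, if_pos (show (2*m+1-x)/2 < m by omega)]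
    omega

lemma filt_len (p : ℕ → Bool) (n : ℕ) :
    ((List.range n).filter p).length = ∑ j ∈ Finset.range n, if p j then 1 else 0 := by
  induction n with
  | zero => simp
  | succ n ih =>
    rw [List.range_succ, List.filter_append, List.length_append, ih, Finset.sum_range_succ]
    cases hp : p n <;> simp [List.filter, hp]

lemma sum_mod2 (n : ℕ) : ∑ i ∈ Finset.range n, i % 2 = n / 2 := by
  induction n with
  | zero => simp
  | succ n ih => rw [Finset.sum_range_succ, ih]; omega

lemma sumpar (i m : ℕ) :
    (∑ j ∈ Finset.range m, if (i + j) % 2 = 1 then 1 else 0) = (m + i % 2) / 2 := by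
  induction m with
  | zero => simp
  | succ m ih => rw [Finset.sum_range_succ, ih]; split_ifs <;> omega

lemma sumrows (m : ℕ) :
    (∑ i ∈ Finset.range m, (m + i % 2) / 2) = m * m / 2 := by
  have h1 : ∀ i ∈ Finset.range m, (m + i % 2) / 2 = m / 2 + m % 2 * (i % 2) := by
    intro i _
    rcases Nat.mod_two_eq_zero_or_one m with h | h <;>
      rcases Nat.mod_two_eq_zero_or_one i with h' | h' <;> simp [h, h'] <;> omega
  rw [Finset.sum_congr rfl h1, Finset.sum_add_distrib, Finset.sum_const, ← Finset.mul_sum,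
    sum_mod2, Finset.card_range, smul_eq_mul]
  rcases Nat.even_or_odd m with ⟨b, hb⟩ | ⟨b, hb⟩
  · subst hb
    rw [show (b+b)/2 = b by omega, show (b+b)%2 = 0 by omega,
      show (b+b)*(b+b) = 2*((b+b)*b) by ring, Nat.mul_div_cancel_left _ (by norm_num : 0 < 2)]
    omega
  · subst hb
    rw [show (2*b+1)/2 = b by omega, show (2*b+1)%2 = 1 by omega,
      show (2*b+1)*(2*b+1) = 2*((2*b+1)*b + b)+1 by ring]
    omega

lemma edge_shift (m : ℕ) (hm : 1 ≤ m) :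
    (∑ j ∈ Finset.range m, if (j + 1) % 2 = 1 ∧ 3 ≤ j + 1 then 0 else 1) = m / 2 + 1 := by
  induction m with
  | zero => omega
  | succ m ih =>
    rcases Nat.eq_zero_or_pos m with h | h
    · subst h; simp
    · rw [Finset.sum_range_succ, ih h]; split_ifs <;> omega

lemma edge_sum (m : ℕ) (hm : 1 ≤ m) :
    (∑ t ∈ Finset.range m, if (m - t) % 2 = 1 ∧ 3 ≤ m - t then 0 else 1) = m / 2 + 1 := by
  have h1 : ∀ t ∈ Finset.range m,
      (if (m - t) % 2 = 1 ∧ 3 ≤ m - t then (0:ℕ) else 1) =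
        (fun j => if (j + 1) % 2 = 1 ∧ 3 ≤ j + 1 then (0:ℕ) else 1) (m - 1 - t) := by
    intro t ht
    have := Finset.mem_range.mp ht
    have h2 : m - 1 - t + 1 = m - t := by omega
    simp only [h2]
  rw [Finset.sum_congr rfl h1,
    Finset.sum_range_reflect (fun j => if (j + 1) % 2 = 1 ∧ 3 ≤ j + 1 then (0:ℕ) else 1) m,
    edge_shift m hm]


/-- For the chopped square `η_k = (k^{k-1}, k-1)`, the number of boxes whose hook length
is not a principal hook length of `η_k` is `k²/2` for `k` even and `(k²+3)/2` for `k` odd. -/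
theorem stmt_10 (k : ℕ) (hk : 2 ≤ k) (η : List ℕ)
    (hη : η = List.replicate (k - 1) k ++ [k - 1]) :
    (∑ i ∈ Finset.range η.length,
        ((List.range (part η i)).filter fun j => decide (hookLen η i j ∉ hat η)).length) =
      if k % 2 = 0 then k ^ 2 / 2 else (k ^ 2 + 3) / 2 := by
  subst hη
  obtain ⟨m, rfl⟩ : ∃ m, k = m + 1 := ⟨k - 1, by omega⟩
  have hm : 1 ≤ m := by omega
  simp only [Nat.add_sub_cancel]
  rw [show (List.replicate m (m+1) ++ [m]).length = m + 1 by simp]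
  rw [Finset.sum_range_succ]
  have hlast : ((List.range (part (List.replicate m (m+1) ++ [m]) m)).filter
      fun j => decide (hookLen (List.replicate m (m+1) ++ [m]) m j ∉
        hat (List.replicate m (m+1) ++ [m]))).length = m / 2 + 1 := by
    rw [part_eta' m m, if_neg (lt_irrefl m), if_pos rfl, filt_len]
    have hc : ∀ j ∈ Finset.range m,
        (if decide (hookLen (List.replicate m (m+1) ++ [m]) m j ∉
            hat (List.replicate m (m+1) ++ [m])) then 1 else 0) =
          (if (m - j) % 2 = 1 ∧ 3 ≤ m - j then (0:ℕ) else 1) := by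
      intro j hj
      have hj' := Finset.mem_range.mp hj
      have hv : hookLen (List.replicate m (m+1) ++ [m]) m j = m - j := by
        unfold hookLen
        rw [part_eta' m m, conjPart_eta' m j, if_neg (lt_irrefl m), if_pos rfl, if_pos hj']
        omega
      rw [hv]
      simp only [decide_eq_true_eq, mem_hat']
      split_ifs <;> omega
    rw [Finset.sum_congr rfl hc, edge_sum m hm]
  rw [hlast]
  have hrows : ∀ i ∈ Finset.range m,
      ((List.range (part (List.replicate m (m+1) ++ [m]) i)).filter
        fun j => decide (hookLen (List.replicate m (m+1) ++ [m]) i j ∉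
          hat (List.replicate m (m+1) ++ [m]))).length =
        (m + i % 2) / 2 + (if (m - i) % 2 = 1 ∧ 3 ≤ m - i then (0:ℕ) else 1) := by
    intro i hi
    have hi' := Finset.mem_range.mp hi
    rw [part_eta' m i, if_pos hi', filt_len, Finset.sum_range_succ]
    congr 1
    · have hc : ∀ j ∈ Finset.range m,
          (if decide (hookLen (List.replicate m (m+1) ++ [m]) i j ∉
              hat (List.replicate m (m+1) ++ [m])) then 1 else 0) =
            (if (i + j) % 2 = 1 then (1:ℕ) else 0) := by
        intro j hj
        have hj' := Finset.mem_range.mp hj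
        have hv : hookLen (List.replicate m (m+1) ++ [m]) i j = 2*m+1-i-j := by
          unfold hookLen
          rw [part_eta' m i, conjPart_eta' m j, if_pos hi', if_pos hj']
          omega
        rw [hv]
        simp only [decide_eq_true_eq, mem_hat']
        split_ifs <;> omega
      rw [Finset.sum_congr rfl hc, sumpar]
    · have hv : hookLen (List.replicate m (m+1) ++ [m]) i m = m - i := by
        unfold hookLen
        rw [part_eta' m i, conjPart_eta' m m, if_pos hi', if_neg (lt_irrefl m), if_pos rfl]
        omega
      rw [hv]
      simp only [decide_eq_true_eq, mem_hat']
      split_ifs <;> omega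
  rw [Finset.sum_congr rfl hrows, Finset.sum_add_distrib, sumrows, edge_sum m hm]
  rcases Nat.even_or_odd m with ⟨b, hb⟩ | ⟨b, hb⟩ <;> subst hb
  · rw [if_neg (by omega)]
    have e1 : (b+b)*(b+b)/2 = 2*(b*b) := by
      rw [show (b+b)*(b+b) = 2*(2*(b*b)) by ring, Nat.mul_div_cancel_left _ (by norm_num : 0 < 2)]
    have e2 : ((b+b+1)^2+3)/2 = 2*(b*b)+2*b+2 := by
      rw [show (b+b+1)^2+3 = 2*(2*(b*b)+2*b+2) by ring,
        Nat.mul_div_cancel_left _ (by norm_num : 0 < 2)]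
    rw [e1, e2]
    generalize b*b = c
    omega
  · rw [if_pos (by omega)]
    have e1 : (2*b+1)*(2*b+1)/2 = 2*(b*b)+2*b := by
      rw [show (2*b+1)*(2*b+1) = 2*(2*(b*b)+2*b)+1 by ring]
      generalize b*b = c
      omega
    have e2 : (2*b+1+1)^2/2 = 2*(b*b)+4*b+2 := by
      rw [show (2*b+1+1)^2 = 2*(2*(b*b)+4*b+2) by ring,
        Nat.mul_div_cancel_left _ (by norm_num : 0 < 2)]
    rw [e1, e2]
    generalize b*b = c
    omega
end

section
/- Let $\rho$ be a partition of $n$ with principal hook partition $\hat\rho$. For every partition $\tau$ obtained from $\rho$ by moving one removable box to an addable position (i.e., $\tau \in N(\rho,1)$), the character value $\chi^{\tau}(\hat\rho)$ is $0$, $1$, or $-1$. -/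
namespace Stmt11Aux

/-! ### Auxiliary definitions -/

/-- Padded β-set of a (β-number) list `b`, as a finset, padded to size `T`. -/
def padB (b : List ℕ) (T : ℕ) : Finset ℕ :=
  (b.map (· + (T - b.length))).toFinset ∪ Finset.range (T - b.length)

/-- Padded β-set of a partition. -/
def P (l : List ℕ) (T : ℕ) : Finset ℕ := padB (betaSet l) T

/-- `B` is obtained from `A` by moving at most one box (in padded β-set terms). -/
def Rel (A B : Finset ℕ) : Prop :=
  B = A ∨ ∃ a c, a ∈ A ∧ 1 ≤ a ∧ a - 1 ∉ A ∧
    c ∈ (A.erase a) ∪ {a - 1} ∧ c + 1 ∉ (A.erase a) ∪ {a - 1} ∧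
    B = (((A.erase a) ∪ {a - 1}).erase c) ∪ {c + 1}

/-- Remove the first row and column. -/
def stripRC (l : List ℕ) : List ℕ := ((l.tail).map (· - 1)).filter (fun x => 0 < x)

/-! ### Basic partition facts -/

theorem isPartition_nil : IsPartition [] := ⟨List.Pairwise.nil, by simp⟩

theorem isPartition_cons {a : ℕ} {m : List ℕ} (h : IsPartition (a :: m)) :
    IsPartition m ∧ 1 ≤ a ∧ ∀ y ∈ m, y ≤ a := by
  obtain ⟨hs, hp⟩ := h
  rw [List.pairwise_cons] at hs
  exact ⟨⟨hs.2, fun x hx => hp x (List.mem_cons_of_mem _ hx)⟩,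
    hp a (List.mem_cons_self), hs.1⟩

theorem part_cons_zero (a : ℕ) (m : List ℕ) : part (a :: m) 0 = a := rfl

theorem part_cons_succ (a : ℕ) (m : List ℕ) (i : ℕ) : part (a :: m) (i + 1) = part m i := rfl

theorem part_nil (i : ℕ) : part [] i = 0 := by cases i <;> rfl

theorem part_pos {l : List ℕ} (h : IsPartition l) {i : ℕ} (hi : i < l.length) :
    1 ≤ part l i := by
  have : l.getD i 0 = l.get ⟨i, hi⟩ := List.getD_eq_get l 0 ⟨i, hi⟩
  rw [part, this]
  exact h.2 _ (l.get_mem _)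

theorem part_antitone' {l : List ℕ} (h : l.Pairwise (· ≥ ·)) {i j : ℕ} (hij : i ≤ j) :
    part l j ≤ part l i := by
  by_cases hj : j < l.length
  · have hi : i < l.length := lt_of_le_of_lt hij hj
    rw [part, part, List.getD_eq_get l 0 ⟨j, hj⟩, List.getD_eq_get l 0 ⟨i, hi⟩]
    rcases Nat.eq_or_lt_of_le hij with rfl | hlt
    · exact le_refl _
    · exact List.pairwise_iff_get.mp h ⟨i, hi⟩ ⟨j, hj⟩ hlt
  · rw [part, List.getD_eq_default l 0 (by omega)]
    exact Nat.zero_le _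

theorem part_antitone {l : List ℕ} (h : IsPartition l) {i j : ℕ} (hij : i ≤ j) :
    part l j ≤ part l i := part_antitone' h.1 hij

theorem part_le_head {l : List ℕ} (h : IsPartition l) (i : ℕ) : part l i ≤ part l 0 :=
  part_antitone h (Nat.zero_le i)

theorem part_eq_zero {l : List ℕ} {i : ℕ} (hi : l.length ≤ i) : part l i = 0 :=
  List.getD_eq_default l 0 hi

theorem lt_length_of_part_pos {l : List ℕ} {i : ℕ} (h : 0 < part l i) : i < l.length := by
  by_contra hc
  rw [part_eq_zero (by omega)] at h
  omega

/-! ### betaSet facts -/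

theorem betaSet_nil : betaSet [] = [] := rfl

theorem betaSet_cons (a : ℕ) (m : List ℕ) :
    betaSet (a :: m) = (a + m.length) :: betaSet m := by
  unfold betaSet
  rw [List.length_cons, List.range_succ_eq_map, List.map_cons, List.map_map]
  congr 1
  apply List.map_congr_left
  intro i _
  show betaEntry (a :: m) (i + 1) = betaEntry m i
  unfold betaEntry
  rw [part_cons_succ, List.length_cons]
  omega

theorem betaSet_length (l : List ℕ) : (betaSet l).length = l.length := by
  simp [betaSet]

theorem mem_betaSet_iff {l : List ℕ} {x : ℕ} :
    x ∈ betaSet l ↔ ∃ i < l.length, x = betaEntry l i := by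
  simp [betaSet, eq_comm]

theorem mem_betaSet_pos {l : List ℕ} (h : IsPartition l) {x : ℕ} (hx : x ∈ betaSet l) :
    1 ≤ x := by
  obtain ⟨i, hi, rfl⟩ := mem_betaSet_iff.mp hx
  have := part_pos h hi
  unfold betaEntry
  omega

theorem mem_betaSet_le {l : List ℕ} (h : IsPartition l) {x : ℕ} (hx : x ∈ betaSet l) :
    x ≤ betaEntry l 0 := by
  obtain ⟨i, hi, rfl⟩ := mem_betaSet_iff.mp hx
  have := part_le_head h i
  unfold betaEntry
  omega

theorem head_mem_betaSet {l : List ℕ} (hl : l ≠ []) : betaEntry l 0 ∈ betaSet l :=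
  mem_betaSet_iff.mpr ⟨0, List.length_pos_iff.mpr hl, rfl⟩

theorem betaSet_sorted {l : List ℕ} (h : IsPartition l) : (betaSet l).Pairwise (· > ·) := by
  induction l with
  | nil => exact List.Pairwise.nil
  | cons a m ih =>
      obtain ⟨hm, ha, hle⟩ := isPartition_cons h
      rw [betaSet_cons, List.pairwise_cons]
      refine ⟨fun x hx => ?_, ih hm⟩
      have hxle := mem_betaSet_le hm hx
      have hx1 := mem_betaSet_pos hm hx
      have hm0 : part m 0 ≤ a := by
        rcases m with _ | ⟨c, m'⟩
        · simp [part_nil]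
        · exact hle c (List.mem_cons_self)
      have hlen : 1 ≤ m.length := by
        rcases m with _ | ⟨c, m'⟩
        · rw [betaSet_nil] at hx; simp at hx
        · simp
      unfold betaEntry at hxle
      omega

theorem betaSet_nodup {l : List ℕ} (h : IsPartition l) : (betaSet l).Nodup :=
  (betaSet_sorted h).nodup

/-! ### sorted list facts -/

theorem sorted_gt_of_ge_nodup {b : List ℕ} (h : b.Pairwise (· ≥ ·)) (hn : b.Nodup) :
    b.Pairwise (· > ·) := by
  have := List.Pairwise.and h hn
  exact this.imp (fun h => lt_of_le_of_ne h.1.le (Ne.symm h.2))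

theorem chain_getD {b : List ℕ} (h : b.Pairwise (· > ·)) :
    ∀ j i, i ≤ j → j < b.length → b.getD j 0 + j ≤ b.getD i 0 + i := by
  intro j
  induction j with
  | zero => intro i hi _; have : i = 0 := by omega
            subst this; exact le_refl _
  | succ j ih =>
      intro i hi hlen
      rcases Nat.eq_or_lt_of_le hi with rfl | hlt
      · exact le_refl _
      · have hj : j < b.length := by omega
        have h1 : b.getD (j+1) 0 < b.getD j 0 := by
          rw [List.getD_eq_getElem b 0 hlen, List.getD_eq_getElem b 0 hj]
          exact List.pairwise_iff_get.mp h ⟨j, hj⟩ ⟨j+1, hlen⟩ (by simp)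
        have h2 := ih i (by omega) hj
        omega

theorem sortDesc_perm (l : List ℕ) : List.Perm (sortDesc l) l := List.perm_insertionSort _ l

instance : IsTotal ℕ (· ≥ ·) := ⟨fun a b => le_total b a⟩
instance : IsTrans ℕ (· ≥ ·) := ⟨fun _ _ _ h1 h2 => le_trans h2 h1⟩

theorem sortDesc_sorted (l : List ℕ) : (sortDesc l).Pairwise (· ≥ ·) :=
  List.pairwise_insertionSort _ l

/-! ### partOfBeta facts -/

theorem partOfBeta_nil : partOfBeta [] = [] := rfl

theorem partOfBeta_cons {x : ℕ} {m : List ℕ} (hx : m.length + 1 ≤ x) :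
    partOfBeta (x :: m) = (x - m.length) :: partOfBeta m := by
  unfold partOfBeta
  rw [List.length_cons, List.range_succ_eq_map, List.map_cons, List.map_map,
    List.filter_cons]
  have h0 : part (x :: m) 0 - ((m.length + 1) - 1 - 0) = x - m.length := by
    rw [part_cons_zero]; omega
  rw [h0]
  have hpos : (decide (0 < x - m.length)) = true := by
    simp; omega
  rw [if_pos hpos]
  congr 2
  apply List.map_congr_left
  intro i _
  show part (x :: m) (i+1) - ((m.length + 1) - 1 - (i+1)) = part m i - (m.length - 1 - i)
  rw [part_cons_succ]
  omega

theorem length_partOfBeta_le (b : List ℕ) : (partOfBeta b).length ≤ b.length := by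
  unfold partOfBeta
  calc _ ≤ ((List.range b.length).map fun i => part b i - (b.length - 1 - i)).length :=
        List.length_filter_le _ _
    _ = b.length := by simp

theorem isPartition_partOfBeta {b : List ℕ} (h : b.Pairwise (· > ·)) :
    IsPartition (partOfBeta b) := by
  constructor
  · apply List.Pairwise.filter
    rw [List.pairwise_iff_getElem]
    intro i j hi hj hij
    simp only [List.getElem_map, List.getElem_range] at *
    rw [List.length_map, List.length_range] at hi hj
    have h1 : b.getD j 0 + j ≤ b.getD i 0 + i := chain_getD h j i (by omega) hj
    show part b j - (b.length - 1 - j) ≤ part b i - (b.length - 1 - i)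
    unfold part at *
    omega
  · intro x hx
    have := List.of_mem_filter hx
    simpa using this

/-! ### padB facts -/

theorem padB_cons (z : ℕ) (m : List ℕ) (T : ℕ) :
    padB (z :: m) T = insert (z + (T - 1 - m.length)) (padB m (T - 1)) := by
  unfold padB
  rw [List.length_cons, List.map_cons, List.toFinset_cons]
  have h1 : T - (m.length + 1) = T - 1 - m.length := by omega
  rw [h1, Finset.insert_union]

theorem padB_perm {b₁ b₂ : List ℕ} (h : List.Perm b₁ b₂) (T : ℕ) : padB b₁ T = padB b₂ T := by
  unfold padB
  rw [h.length_eq]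
  congr 1
  ext z
  simp only [List.mem_toFinset, List.mem_map]
  constructor <;> rintro ⟨x, hx, rfl⟩
  · exact ⟨x, h.mem_iff.mp hx, rfl⟩
  · exact ⟨x, h.mem_iff.mpr hx, rfl⟩

theorem mem_padB {b : List ℕ} {T y : ℕ} :
    y ∈ padB b T ↔ (∃ x ∈ b, y = x + (T - b.length)) ∨ y < T - b.length := by
  unfold padB
  simp [eq_comm]

theorem padB_dense {b : List ℕ} (h : b.Pairwise (· > ·))
    (hd : ∀ i, i < b.length → b.getD i 0 = b.length - 1 - i) {T : ℕ} (hT : b.length ≤ T) :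
    padB b T = Finset.range T := by
  ext y
  rw [mem_padB, Finset.mem_range]
  constructor
  · rintro (⟨x, hx, rfl⟩ | hy)
    · obtain ⟨i, hi, rfl⟩ := List.mem_iff_getElem.mp hx
      rw [← List.getD_eq_getElem b 0 hi, hd i hi]
      omega
    · omega
  · intro hy
    by_cases hc : y < T - b.length
    · exact Or.inr hc
    · left
      have hlen : 0 < b.length := by omega
      set i := T - 1 - y with hi
      have hib : i < b.length := by omega
      refine ⟨b.getD i 0, ?_, ?_⟩
      · rw [List.getD_eq_getElem b 0 hib]; exact List.getElem_mem _
      · rw [hd i hib]; omega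

theorem padB_partOfBeta {b : List ℕ} (h : b.Pairwise (· > ·)) {T : ℕ} (hT : b.length ≤ T) :
    P (partOfBeta b) T = padB b T := by
  induction b generalizing T with
  | nil => rfl
  | cons x m ih =>
      have hm : m.Pairwise (· > ·) := (List.pairwise_cons.mp h).2
      rw [List.length_cons] at hT
      by_cases hx : m.length + 1 ≤ x
      · rw [partOfBeta_cons hx]
        unfold P
        rw [betaSet_cons, padB_cons, padB_cons]
        have e1 : (betaSet (partOfBeta m)).length = (partOfBeta m).length :=
          betaSet_length _
        have e2 : (partOfBeta m).length ≤ m.length := length_partOfBeta_le m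
        have e3 : x - m.length + (partOfBeta m).length + (T - 1 - (betaSet (partOfBeta m)).length)
            = x + (T - 1 - m.length) := by
          rw [e1]; omega
        rw [e3]
        congr 1
        exact ih hm (by omega)
      · -- dense case
        push_neg at hx
        have hd : ∀ i, i < (x :: m).length → (x :: m).getD i 0 = (x :: m).length - 1 - i := by
          intro i hi
          have hup := chain_getD h i 0 (Nat.zero_le i) hi
          have hdown := chain_getD h ((x :: m).length - 1) i (by omega) (by rw [List.length_cons]; omega)
          simp only [List.getD_cons_zero] at hup
          have : 0 ≤ (x :: m).getD ((x :: m).length - 1) 0 := Nat.zero_le _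
          rw [List.length_cons] at *
          omega
        have hempty : partOfBeta (x :: m) = [] := by
          unfold partOfBeta
          rw [List.filter_eq_nil_iff]
          intro a ha
          rw [List.mem_map] at ha
          obtain ⟨i, hi, rfl⟩ := ha
          rw [List.mem_range] at hi
          have := hd i hi
          unfold part
          simp only [decide_eq_true_eq]
          omega
        rw [hempty]
        unfold P
        rw [betaSet_nil]
        have h1 : padB [] T = Finset.range T := by
          unfold padB; simp
        rw [h1, padB_dense h hd hT]

/-! ### removeHook facts -/

theorem removeHook_facts {l : List ℕ} (hl : IsPartition l) {x r : ℕ}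
    (hx : x ∈ betaSet l) (hrx : r ≤ x) (hr : 1 ≤ r) (hxr : x - r ∉ betaSet l) :
    IsPartition (removeHook l x r) ∧ (removeHook l x r).length ≤ l.length ∧
    ∀ T, l.length ≤ T →
      P (removeHook l x r) T =
        ((P l T).erase (x + (T - l.length))) ∪ {x - r + (T - l.length)} := by
  have hx1 : 1 ≤ x := mem_betaSet_pos hl hx
  set bs := sortDesc ((x - r) :: (betaSet l).erase x) with hbs
  have hrh : removeHook l x r = partOfBeta bs := rfl
  have hperm : List.Perm bs ((x - r) :: (betaSet l).erase x) := sortDesc_perm _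
  have hnodupB : (betaSet l).Nodup := betaSet_nodup hl
  have hxr' : x - r ∉ (betaSet l).erase x := fun hc => hxr (List.mem_of_mem_erase hc)
  have hnodup0 : ((x - r) :: (betaSet l).erase x).Nodup :=
    List.nodup_cons.mpr ⟨hxr', hnodupB.erase x⟩
  have hsorted : bs.Pairwise (· > ·) :=
    sorted_gt_of_ge_nodup (sortDesc_sorted _) (hperm.nodup_iff.mpr hnodup0)
  have hlenB : (betaSet l).length = l.length := betaSet_length l
  have hlpos : 0 < l.length := by
    rcases l with _ | _
    · rw [betaSet_nil] at hx; simp at hx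
    · simp
  have hlen : bs.length = l.length := by
    rw [hperm.length_eq, List.length_cons, List.length_erase_of_mem hx, hlenB]
    omega
  refine ⟨hrh ▸ isPartition_partOfBeta hsorted, ?_, ?_⟩
  · rw [hrh]
    calc (partOfBeta bs).length ≤ bs.length := length_partOfBeta_le bs
      _ = l.length := hlen
  · intro T hT
    rw [hrh, padB_partOfBeta hsorted (show bs.length ≤ T by omega), padB_perm hperm]
    ext y
    rw [mem_padB, Finset.mem_union, Finset.mem_erase, Finset.mem_singleton]
    unfold P
    rw [mem_padB]
    have hlen2 : ((x - r) :: (betaSet l).erase x).length = l.length := by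
      rw [List.length_cons, List.length_erase_of_mem hx, hlenB]; omega
    rw [hlen2, hlenB]
    set sh := T - l.length with hsh
    constructor
    · rintro (⟨w, hw, rfl⟩ | hy)
      · rcases List.mem_cons.mp hw with rfl | hw'
        · exact Or.inr rfl
        · have hww := (List.Nodup.mem_erase_iff hnodupB).mp hw'
          exact Or.inl ⟨by omega, Or.inl ⟨w, hww.2, rfl⟩⟩
      · exact Or.inl ⟨by omega, Or.inr hy⟩
    · rintro (⟨hne, ⟨w, hw, rfl⟩ | hy⟩ | rfl)
      · refine Or.inl ⟨w, List.mem_cons.mpr (Or.inr ?_), rfl⟩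
        exact (List.Nodup.mem_erase_iff hnodupB).mpr ⟨by omega, hw⟩
      · exact Or.inr hy
      · exact Or.inl ⟨x - r, List.mem_cons_self, rfl⟩

/-! ### stripRC and hat -/

theorem strip_parts {m : List ℕ} (hm : m.Pairwise (· ≥ ·)) (a i : ℕ) :
    part (stripRC (a :: m)) i = part m i - 1 := by
  induction m generalizing a i with
  | nil => simp [stripRC, part_nil]
  | cons c m' ih =>
      have hm' : m'.Pairwise (· ≥ ·) := (List.pairwise_cons.mp hm).2
      by_cases hc : 2 ≤ c
      · have hstep : stripRC (a :: c :: m') = (c - 1) :: stripRC (c :: m') := by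
          unfold stripRC
          rw [List.tail_cons, List.tail_cons, List.map_cons, List.filter_cons,
            if_pos (by simp; omega)]
        rw [hstep]
        cases i with
        | zero => rw [part_cons_zero, part_cons_zero]
        | succ i => rw [part_cons_succ, part_cons_succ]; exact ih hm' c i
      · have hall : stripRC (a :: c :: m') = [] := by
          unfold stripRC
          rw [List.tail_cons, List.filter_eq_nil_iff]
          intro w hw
          rw [List.mem_map] at hw
          obtain ⟨p, hp, rfl⟩ := hw
          have hpc : p ≤ c := by
            rcases List.mem_cons.mp hp with rfl | hp'
            · exact le_refl _
            · exact (List.pairwise_cons.mp hm).1 p hp'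
          simp
          omega
        rw [hall, part_nil]
        have h1 : part (c :: m') i ≤ c := by
          have := part_antitone' hm (Nat.zero_le i)
          rw [part_cons_zero] at this
          exact this
        omega

theorem isPartition_stripRC {l : List ℕ} (h : IsPartition l) : IsPartition (stripRC l) := by
  rcases l with _ | ⟨a, m⟩
  · exact ⟨List.Pairwise.nil, by simp [stripRC]⟩
  · obtain ⟨hm, _, _⟩ := isPartition_cons h
    constructor
    · unfold stripRC
      rw [List.tail_cons]
      apply List.Pairwise.filter
      exact List.Pairwise.map _ (fun p q hpq => by omega) hm.1
    · intro w hw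
      have := List.of_mem_filter hw
      simpa using this

theorem length_stripRC_le (l : List ℕ) : (stripRC l).length ≤ l.length := by
  cases l with
  | nil => simp [stripRC]
  | cons a m =>
      calc ((m.map (· - 1)).filter (fun x => 0 < x)).length ≤ (m.map (· - 1)).length :=
            List.length_filter_le _ _
        _ ≤ m.length + 1 := by simp [Nat.le_succ]

theorem orderedInsert_zero (L : List ℕ) (h : ∀ w ∈ L, 1 ≤ w) :
    L.orderedInsert (· ≥ ·) 0 = L ++ [0] := by
  induction L with
  | nil => rfl
  | cons c L ih =>
      rw [List.orderedInsert, if_neg (by have := h c (List.mem_cons_self); omega),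
        ih (fun w hw => h w (List.mem_cons_of_mem _ hw))]
      rfl

theorem betaSet_getD {m : List ℕ} {i : ℕ} (hi : i < m.length) :
    (betaSet m).getD i 0 = betaEntry m i := by
  have h1 : i < (betaSet m).length := by rw [betaSet_length]; exact hi
  rw [List.getD_eq_getElem _ 0 h1]
  simp [betaSet]

theorem removeHook_head {l : List ℕ} (h : IsPartition l) (hl : l ≠ []) :
    removeHook l (betaEntry l 0) (betaEntry l 0) = stripRC l := by
  rcases l with _ | ⟨a, m⟩
  · simp at hl
  obtain ⟨hm, ha, hle⟩ := isPartition_cons h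
  have hbe : betaEntry (a :: m) 0 = a + m.length := by
    unfold betaEntry
    rw [part_cons_zero, List.length_cons]
    omega
  unfold removeHook
  rw [hbe]
  have h1 : a + m.length - (a + m.length) = 0 := by omega
  rw [h1, betaSet_cons, List.erase_cons_head]
  have h2 : sortDesc (0 :: betaSet m) = betaSet m ++ [0] := by
    unfold sortDesc
    rw [List.insertionSort_cons,
      List.Pairwise.insertionSort_eq ((betaSet_sorted hm).imp (fun h => le_of_lt h))]
    exact orderedInsert_zero _ (fun w hw => mem_betaSet_pos hm hw)
  rw [h2]
  unfold partOfBeta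
  have hlen : (betaSet m ++ [0]).length = m.length + 1 := by
    simp [betaSet_length]
  rw [hlen]
  have h3 : (List.range (m.length + 1)).map
        (fun i => part (betaSet m ++ [0]) i - (m.length + 1 - 1 - i))
      = (m.map (· - 1)) ++ [0] := by
    apply List.ext_getElem
    · simp
    · intro i hi1 hi2
      simp only [List.length_map, List.length_range] at hi1
      simp only [List.getElem_map, List.getElem_range]
      by_cases him : i < m.length
      · have hbl : i < (betaSet m).length := by rw [betaSet_length]; exact him
        have hp : part (betaSet m ++ [0]) i = betaEntry m i := by
          unfold part
          rw [List.getD_append _ _ _ _ hbl]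
          exact betaSet_getD him
        rw [hp, List.getElem_append_left (by simpa using him), List.getElem_map]
        unfold betaEntry
        have := part_pos hm him
        have hpi : part m i = m[i] := by unfold part; rw [List.getD_eq_getElem _ 0 him]
        omega
      · have hieq : i = m.length := by omega
        subst hieq
        have hp : part (betaSet m ++ [0]) m.length = 0 := by
          unfold part
          rw [List.getD_append_right _ _ _ _ (by rw [betaSet_length])]
          rw [betaSet_length]
          simp
        rw [hp]
        rw [List.getElem_append_right (by simp)]
        simp
  rw [h3, List.filter_append]
  have h4 : List.filter (fun x => decide (0 < x)) [0] = [] := rfl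
  rw [h4, List.append_nil]
  rfl

theorem filter_range_downward (p : ℕ → Bool) (hp : ∀ i j, i ≤ j → p j = true → p i = true) :
    ∀ n, (List.range n).filter p = List.range (((List.range n).filter p).length) := by
  intro n
  induction n with
  | zero => rfl
  | succ n ih =>
      rw [List.range_succ, List.filter_append]
      by_cases hn : p n = true
      · have hall : ∀ i ∈ List.range n, p i = true := by
          intro i hi
          rw [List.mem_range] at hi
          exact hp i n (by omega) hn
        rw [List.filter_eq_self.mpr hall, List.filter_cons, if_pos hn, List.filter_nil]
        have hlen : (List.range n ++ [n]).length = n + 1 := by simp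
        rw [hlen, List.range_succ]
      · rw [List.filter_cons, if_neg hn]
        simp only [List.filter_nil, List.append_nil]
        exact ih

theorem lt_durfee_iff {l : List ℕ} (h : IsPartition l) {i : ℕ} :
    i < durfee l ↔ i < part l i := by
  have hp : ∀ i j, i ≤ j → (decide (j < part l j)) = true → (decide (i < part l i)) = true := by
    intro i j hij hj
    simp only [decide_eq_true_eq] at *
    have := part_antitone h hij
    omega
  unfold durfee
  constructor
  · intro hi
    have h1 : i ∈ List.range (((List.range l.length).filter
        (fun i => decide (i < part l i))).length) := List.mem_range.mpr hi
    rw [← filter_range_downward _ hp] at h1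
    have := List.of_mem_filter h1
    simpa using this
  · intro hi
    have hilen : i < l.length := lt_length_of_part_pos (by omega)
    have h1 : i ∈ (List.range l.length).filter (fun i => decide (i < part l i)) :=
      List.mem_filter.mpr ⟨List.mem_range.mpr hilen, by simpa using hi⟩
    rw [filter_range_downward _ hp] at h1
    simpa using h1

theorem durfee_stripRC {l : List ℕ} (h : IsPartition l) (hl : l ≠ []) :
    durfee l = durfee (stripRC l) + 1 := by
  rcases l with _ | ⟨a, m⟩
  · simp at hl
  obtain ⟨hm, ha, _⟩ := isPartition_cons h
  have hs : IsPartition (stripRC (a :: m)) := isPartition_stripRC h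
  have key : ∀ i, i < durfee (a :: m) ↔ i < durfee (stripRC (a :: m)) + 1 := by
    intro i
    rw [lt_durfee_iff h]
    cases i with
    | zero =>
        rw [part_cons_zero]
        constructor <;> intro <;> omega
    | succ i =>
        rw [part_cons_succ]
        have h2 : (i + 1 < durfee (stripRC (a :: m)) + 1) ↔ i < durfee (stripRC (a :: m)) := by
          omega
        rw [h2, lt_durfee_iff hs, strip_parts hm.1 a i]
        omega
  have hA : ¬ (durfee (a :: m) < durfee (stripRC (a :: m)) + 1) := by
    intro hc
    exact absurd ((key _).mpr hc) (lt_irrefl _)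
  have hB : ¬ (durfee (stripRC (a :: m)) + 1 < durfee (a :: m)) := by
    intro hc
    exact absurd ((key _).mp hc) (lt_irrefl _)
  omega

theorem conjPart_stripRC {a : ℕ} {m : List ℕ} (j : ℕ) (ha : j + 1 < a) :
    conjPart (a :: m) (j + 1) = conjPart (stripRC (a :: m)) j + 1 := by
  unfold conjPart stripRC
  rw [List.tail_cons, List.filter_cons, if_pos (by simp; omega), List.length_cons]
  congr 1
  rw [List.filter_filter, List.filter_map, List.length_map]
  congr 1
  apply List.filter_congr
  intro x hx
  rw [Bool.eq_iff_iff]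
  simp only [Function.comp_apply, Bool.and_eq_true, decide_eq_true_eq]
  omega

theorem hat_cons {l : List ℕ} (h : IsPartition l) (hl : l ≠ []) :
    hat l = betaEntry l 0 :: hat (stripRC l) := by
  rcases l with _ | ⟨a, m⟩
  · simp at hl
  obtain ⟨hm, ha, _⟩ := isPartition_cons h
  unfold hat
  rw [durfee_stripRC h hl, List.range_succ_eq_map, List.map_cons, List.map_map]
  congr 1
  · -- hookLen (a::m) 0 0 = betaEntry (a::m) 0
    have hfil : (a :: m).filter (fun p => decide (0 < p)) = a :: m := by
      apply List.filter_eq_self.mpr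
      intro w hw
      have := h.2 w hw
      simpa using this
    unfold hookLen betaEntry conjPart
    rw [hfil, List.length_cons]
    omega
  · apply List.map_congr_left
    intro i hi
    rw [List.mem_range] at hi
    show hookLen (a :: m) (i + 1) (i + 1) = hookLen (stripRC (a :: m)) i i
    have hid : i + 1 < durfee (a :: m) := by rw [durfee_stripRC h hl]; omega
    have hpart : i + 1 < part (a :: m) (i + 1) := (lt_durfee_iff h).mp hid
    have hpa : part (a :: m) (i + 1) ≤ a := by
      have := part_le_head h (i + 1)
      rw [part_cons_zero] at this
      exact this
    rw [part_cons_succ] at hpart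
    have haj : i + 1 < a := by
      rw [part_cons_succ] at hpa
      omega
    unfold hookLen
    rw [part_cons_succ, conjPart_stripRC i haj, strip_parts hm.1 a i]
    omega

/-! ### the key combinatorial lemmas -/

theorem key_pin {A B : Finset ℕ} {s r a c : ℕ} (hr : 1 ≤ r) (hs : 1 ≤ s)
    (hdense : ∀ k, k < s → k ∈ A) (hsA : s ∉ A) (hmax : ∀ w ∈ A, w ≤ s + r)
    (haA : a ∈ A) (ha1 : 1 ≤ a) (haN : a - 1 ∉ A)
    (hcS : c ∈ (A.erase a) ∪ {a - 1}) (hcN : c + 1 ∉ (A.erase a) ∪ {a - 1})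
    (hBe : B = (((A.erase a) ∪ {a - 1}).erase c) ∪ {c + 1})
    {y : ℕ} (hy : y ∈ B) (hyr : r ≤ y) (hyB : y - r ∉ B) :
    (c = s + r ∧ y = s + r + 1) ∨ (c ≠ s + r ∧ c = s - 1 ∧ y = s - 1 + r) ∨
      (c ≠ s + r ∧ c ≠ s - 1 ∧ y = s + r) := by
  have hsa : s + 1 ≤ a := by
    by_contra hc
    push_neg at hc
    exact haN (hdense _ (by omega))
  have hcA : c ≤ s + r := by
    rcases Finset.mem_union.mp hcS with hc | hc
    · exact hmax c (Finset.mem_of_mem_erase hc)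
    · rw [Finset.mem_singleton] at hc
      have := hmax a haA
      omega
  have hc1 : s ≤ c + 1 := by
    by_contra hc'
    push_neg at hc'
    exact hcN (Finset.mem_union_left _ (Finset.mem_erase.mpr ⟨by omega, hdense _ (by omega)⟩))
  have hyy : y ≤ s + r ∨ y = c + 1 := by
    rw [hBe] at hy
    rcases Finset.mem_union.mp hy with h' | h'
    · have h'' := Finset.mem_of_mem_erase h'
      rcases Finset.mem_union.mp h'' with h3 | h3
      · exact Or.inl (hmax _ (Finset.mem_of_mem_erase h3))
      · rw [Finset.mem_singleton] at h3
        left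
        have := hmax a haA
        omega
    · exact Or.inr (Finset.mem_singleton.mp h')
  have hyc : y - r < s → y - r = c := by
    intro hlt
    by_contra hne
    apply hyB
    rw [hBe]
    exact Finset.mem_union_left _ (Finset.mem_erase.mpr ⟨hne, Finset.mem_union_left _
      (Finset.mem_erase.mpr ⟨by omega, hdense _ hlt⟩)⟩)
  have hcp1B : c + 1 ∈ B := by
    rw [hBe]
    exact Finset.mem_union_right _ (Finset.mem_singleton_self _)
  by_cases hcM : c = s + r
  · left
    refine ⟨hcM, ?_⟩
    have hMB : s + r ∉ B := by
      rw [hBe]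
      intro hc'
      rcases Finset.mem_union.mp hc' with h' | h'
      · exact (Finset.mem_erase.mp h').1 (by omega)
      · rw [Finset.mem_singleton] at h'
        omega
    by_cases hlt : y - r < s
    · have := hyc hlt
      omega
    · have hne : y ≠ s + r := fun he => hMB (he ▸ hy)
      rcases hyy with h' | h' <;> omega
  · by_cases hcs : c = s - 1
    · right; left
      refine ⟨hcM, hcs, ?_⟩
      have hsB : s ∈ B := by
        have he : s = c + 1 := by omega
        rw [he]
        exact hcp1B
      have h1 : y - r ≠ s := fun he => hyB (he ▸ hsB)
      by_cases hlt : y - r < s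
      · have := hyc hlt
        omega
      · rcases hyy with h' | h' <;> omega
    · right; right
      refine ⟨hcM, hcs, ?_⟩
      by_cases hlt : y - r < s
      · have := hyc hlt
        omega
      · rcases hyy with h' | h' <;> omega

theorem key_a {A B : Finset ℕ} {s r : ℕ} (hr : 1 ≤ r) (hs : 1 ≤ s)
    (hdense : ∀ k, k < s → k ∈ A) (hsA : s ∉ A) (hmax : ∀ y ∈ A, y ≤ s + r)
    (hrel : Rel A B) {y₁ y₂ : ℕ} (h1 : y₁ ∈ B) (h1r : r ≤ y₁) (h1B : y₁ - r ∉ B)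
    (h2 : y₂ ∈ B) (h2r : r ≤ y₂) (h2B : y₂ - r ∉ B) : y₁ = y₂ := by
  rcases hrel with hBA | ⟨a, c, haA, ha1, haN, hcS, hcN, hBe⟩
  · rw [hBA] at h1 h1B h2 h2B
    have pin : ∀ y, y ∈ A → r ≤ y → y - r ∉ A → y = s + r := by
      intro y hy hyr hyB
      have hy1 := hmax y hy
      have hy2 : ¬ (y - r < s) := fun hc => hyB (hdense _ hc)
      omega
    rw [pin y₁ h1 h1r h1B, pin y₂ h2 h2r h2B]
  · have p1 := key_pin hr hs hdense hsA hmax haA ha1 haN hcS hcN hBe h1 h1r h1B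
    have p2 := key_pin hr hs hdense hsA hmax haA ha1 haN hcS hcN hBe h2 h2r h2B
    rcases p1 with ⟨_, hv⟩ | ⟨_, _, hv⟩ | ⟨_, _, hv⟩ <;>
      rcases p2 with ⟨_, hv'⟩ | ⟨_, _, hv'⟩ | ⟨_, _, hv'⟩ <;> omega

theorem key_b {A B : Finset ℕ} {s r : ℕ} (hr : 1 ≤ r) (hs : 1 ≤ s)
    (hdense : ∀ k, k < s → k ∈ A) (hsA : s ∉ A) (hM : s + r ∈ A)
    (hmax : ∀ y ∈ A, y ≤ s + r) (hrel : Rel A B) {y : ℕ}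
    (hy : y ∈ B) (hyr : r ≤ y) (hyB : y - r ∉ B) :
    Rel ((A.erase (s + r)) ∪ {s}) ((B.erase y) ∪ {y - r}) := by
  rcases hrel with hBA | ⟨a, c, haA, ha1, haN, hcS, hcN, hBe⟩
  · rw [hBA] at hy hyB
    have h1 := hmax y hy
    have h2 : ¬ (y - r < s) := fun hc => hyB (hdense _ hc)
    have hy1 : y = s + r := by omega
    have hy2 : y - r = s := by omega
    rw [hBA, hy2, hy1]
    exact Or.inl rfl
  · have hsa : s + 1 ≤ a := by
      by_contra hc
      push_neg at hc
      exact haN (hdense _ (by omega))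
    have hcA : c ≤ s + r := by
      rcases Finset.mem_union.mp hcS with hc | hc
      · exact hmax c (Finset.mem_of_mem_erase hc)
      · rw [Finset.mem_singleton] at hc
        have := hmax a haA
        omega
    have hc1 : s ≤ c + 1 := by
      by_contra hc'
      push_neg at hc'
      exact hcN (Finset.mem_union_left _ (Finset.mem_erase.mpr ⟨by omega, hdense _ (by omega)⟩))
    have hamax := hmax a haA
    have pin := key_pin hr hs hdense hsA hmax haA ha1 haN hcS hcN hBe hy hyr hyB
    rcases pin with ⟨hc, hyv⟩ | ⟨hcM, hcs, hyv⟩ | ⟨hcM, hcs, hyv⟩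
    · -- CASE 1 : c = s + r, y = s + r + 1
      subst hc
      subst hyv
      have hca : a - 1 ≠ s + r := fun he => haN (he ▸ hM)
      have haM : a ≠ s + r := by
        rcases Finset.mem_union.mp hcS with h' | h'
        · exact fun he => (Finset.mem_erase.mp h').1 he.symm
        · rw [Finset.mem_singleton] at h'
          omega
      have hyB' : s + 1 ∉ B := by
        have he : s + r + 1 - r = s + 1 := by omega
        rwa [he] at hyB
      have ha2 : a ≠ s + 2 := by
        intro he
        rcases Nat.lt_or_ge r 2 with hr2 | hr2
        · omega
        · apply hyB'
          rw [hBe]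
          exact Finset.mem_union_left _ (Finset.mem_erase.mpr ⟨by omega,
            Finset.mem_union_right _ (by rw [Finset.mem_singleton]; omega)⟩)
      rw [show s + r + 1 - r = s + 1 by omega]
      by_cases ha1' : a = s + 1
      · left
        subst ha1'
        rw [hBe]
        ext z
        simp only [Finset.mem_union, Finset.mem_erase, Finset.mem_singleton]
        by_cases hzA : z ∈ A
        · have f1 : z ≠ s := fun h => hsA (h ▸ hzA)
          have f2 : z ≤ s + r := hmax z hzA
          simp only [hzA, and_true, true_and, iff_true, iff_false]
          omega
        · have f1 : z ≠ s + r := fun h => hzA (h ▸ hM)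
          have f2 : z ≠ s + 1 := fun h => hzA (h ▸ haA)
          simp only [hzA, and_false, false_and, false_or, or_false, iff_true, iff_false]
          omega
      · right
        refine ⟨a, s, ?_, by omega, ?_, ?_, ?_, ?_⟩
        · exact Finset.mem_union_left _ (Finset.mem_erase.mpr ⟨haM, haA⟩)
        · intro h
          rcases Finset.mem_union.mp h with h' | h'
          · exact haN (Finset.mem_of_mem_erase h')
          · rw [Finset.mem_singleton] at h'
            omega
        · exact Finset.mem_union_left _ (Finset.mem_erase.mpr ⟨by omega,
            Finset.mem_union_right _ (Finset.mem_singleton_self _)⟩)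
        · intro h
          rcases Finset.mem_union.mp h with h' | h'
          · have h'' := Finset.mem_of_mem_erase h'
            rcases Finset.mem_union.mp h'' with h3 | h3
            · have h4 := Finset.mem_erase.mp h3
              apply hyB'
              rw [hBe]
              exact Finset.mem_union_left _ (Finset.mem_erase.mpr ⟨h4.1,
                Finset.mem_union_left _ (Finset.mem_erase.mpr ⟨by omega, h4.2⟩)⟩)
            · rw [Finset.mem_singleton] at h3
              omega
          · rw [Finset.mem_singleton] at h'
            omega
        · rw [hBe]
          ext z
          simp only [Finset.mem_union, Finset.mem_erase, Finset.mem_singleton]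
          by_cases hzA : z ∈ A
          · have f1 : z ≠ s := fun h => hsA (h ▸ hzA)
            have f2 : z ≤ s + r := hmax z hzA
            have f3 : z ≠ a - 1 := fun h => haN (h ▸ hzA)
            simp only [hzA, and_true, true_and, iff_true, iff_false]
            omega
          · have f1 : z ≠ s + r := fun h => hzA (h ▸ hM)
            have f2 : z ≠ a := fun h => hzA (h ▸ haA)
            simp only [hzA, and_false, false_and, false_or, or_false, iff_true, iff_false]
            omega
    · -- CASE 2 : c = s - 1, y = s - 1 + r
      subst hcs
      have hyv' : y - r = s - 1 := by omega
      have hyB' : s - 1 ∉ B := by rwa [hyv'] at hyB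
      rw [hyv', hyv]
      by_cases haM : a = s + r
      · have hr2 : 2 ≤ r := by
          by_contra h'
          push_neg at h'
          exact hcN (Finset.mem_union_right _ (by rw [Finset.mem_singleton]; omega))
        left
        rw [hBe]
        ext z
        simp only [Finset.mem_union, Finset.mem_erase, Finset.mem_singleton]
        by_cases hzA : z ∈ A
        · have f1 : z ≠ s := fun h => hsA (h ▸ hzA)
          have f2 : z ≤ s + r := hmax z hzA
          have f3 : z ≠ a - 1 := fun h => haN (h ▸ hzA)
          simp only [hzA, and_true, true_and, iff_true, iff_false]
          omega
        · have f1 : z ≠ s + r := fun h => hzA (h ▸ hM)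
          have f2 : z ≠ s - 1 := fun h => hzA (h ▸ hdense (s - 1) (by omega))
          simp only [hzA, and_false, false_and, false_or, or_false, iff_true, iff_false]
          omega
      · right
        have ha1' : a ≠ s + 1 := by
          intro he
          exact hcN (Finset.mem_union_right _ (by rw [Finset.mem_singleton]; omega))
        have hyd : s - 1 + r = a - 1 ∨ (s - 1 + r ∈ A ∧ s - 1 + r ≠ a) ∨ s - 1 + r = s := by
          have hy' := hy
          rw [hBe, hyv] at hy'
          rcases Finset.mem_union.mp hy' with h' | h'
          · have h'' := Finset.mem_of_mem_erase h'
            rcases Finset.mem_union.mp h'' with h3 | h3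
            · have h4 := Finset.mem_erase.mp h3
              exact Or.inr (Or.inl ⟨h4.2, h4.1⟩)
            · exact Or.inl (Finset.mem_singleton.mp h3)
          · rw [Finset.mem_singleton] at h'
            right; right; omega
        refine ⟨a, s - 1 + r, ?_, by omega, ?_, ?_, ?_, ?_⟩
        · exact Finset.mem_union_left _ (Finset.mem_erase.mpr ⟨haM, haA⟩)
        · intro h
          rcases Finset.mem_union.mp h with h' | h'
          · exact haN (Finset.mem_of_mem_erase h')
          · rw [Finset.mem_singleton] at h'
            omega
        · rcases hyd with h' | h' | h'
          · rw [h']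
            exact Finset.mem_union_right _ (Finset.mem_singleton_self _)
          · exact Finset.mem_union_left _ (Finset.mem_erase.mpr ⟨h'.2,
              Finset.mem_union_left _ (Finset.mem_erase.mpr ⟨by omega, h'.1⟩)⟩)
          · rw [h']
            exact Finset.mem_union_left _ (Finset.mem_erase.mpr ⟨by omega,
              Finset.mem_union_right _ (Finset.mem_singleton_self _)⟩)
        · intro h
          have he : s - 1 + r + 1 = s + r := by omega
          rw [he] at h
          rcases Finset.mem_union.mp h with h' | h'
          · have h'' := Finset.mem_of_mem_erase h'
            rcases Finset.mem_union.mp h'' with h3 | h3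
            · exact (Finset.mem_erase.mp h3).1 rfl
            · rw [Finset.mem_singleton] at h3
              omega
          · rw [Finset.mem_singleton] at h'
            exact haN (h' ▸ hM)
        · rw [hBe]
          ext z
          simp only [Finset.mem_union, Finset.mem_erase, Finset.mem_singleton]
          by_cases hzA : z ∈ A
          · have f1 : z ≠ s := fun h => hsA (h ▸ hzA)
            have f2 : z ≤ s + r := hmax z hzA
            have f3 : z ≠ a - 1 := fun h => haN (h ▸ hzA)
            simp only [hzA, and_true, true_and, iff_true, iff_false]
            omega
          · have f1 : z ≠ s + r := fun h => hzA (h ▸ hM)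
            have f2 : z ≠ a := fun h => hzA (h ▸ haA)
            have f3 : z ≠ s - 1 := fun h => hzA (h ▸ hdense (s - 1) (by omega))
            simp only [hzA, and_false, false_and, false_or, or_false, iff_true, iff_false]
            omega
    · -- CASE 3 : s ≤ c, c ≠ s + r, y = s + r
      have hc0 : s ≤ c := by omega
      have hyB' : s ∉ B := by
        have he : y - r = s := by omega
        rwa [he] at hyB
      rw [hyv, show s + r - r = s by omega]
      by_cases ha1' : a = s + 1
      · have hcs' : c = s := by
          by_contra hne
          apply hyB'
          rw [hBe]
          exact Finset.mem_union_left _ (Finset.mem_erase.mpr ⟨fun h => hne h.symm,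
            Finset.mem_union_right _ (by rw [Finset.mem_singleton]; omega)⟩)
        have hBA : B = A := by
          rw [hBe, hcs', ha1']
          ext z
          simp only [Finset.mem_union, Finset.mem_erase, Finset.mem_singleton]
          by_cases hzA : z ∈ A
          · have f1 : z ≠ s := fun h => hsA (h ▸ hzA)
            simp only [hzA, and_true, true_and, iff_true, iff_false]
            omega
          · have f1 : z ≠ s + 1 := fun h => hzA (h ▸ (ha1' ▸ haA))
            simp only [hzA, and_false, false_and, false_or, or_false, iff_true, iff_false]
            omega
        rw [hBA]
        exact Or.inl rfl
      · by_cases haM : a = s + r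
        · have hcc : c = s + r - 1 := by
            have hy' := hy
            rw [hBe, hyv] at hy'
            rcases Finset.mem_union.mp hy' with h' | h'
            · exfalso
              have h'' := Finset.mem_of_mem_erase h'
              rcases Finset.mem_union.mp h'' with h3 | h3
              · exact (Finset.mem_erase.mp h3).1 (by omega)
              · rw [Finset.mem_singleton] at h3
                omega
            · rw [Finset.mem_singleton] at h'
              omega
          have hBA : B = A := by
            rw [hBe]
            ext z
            simp only [Finset.mem_union, Finset.mem_erase, Finset.mem_singleton]
            by_cases hzA : z ∈ A
            · have f1 : z ≠ s := fun h => hsA (h ▸ hzA)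
              have f2 : z ≤ s + r := hmax z hzA
              have f3 : z ≠ a - 1 := fun h => haN (h ▸ hzA)
              simp only [hzA, and_true, true_and, iff_true, iff_false]
              omega
            · have f1 : z ≠ s + r := fun h => hzA (h ▸ hM)
              have f2 : z ≠ a := fun h => hzA (h ▸ haA)
              simp only [hzA, and_false, false_and, false_or, or_false, iff_true, iff_false]
              omega
          rw [hBA]
          exact Or.inl rfl
        · have hcneS : c ≠ s := by
            intro he
            rcases Finset.mem_union.mp hcS with h' | h'
            · exact hsA (he ▸ Finset.mem_of_mem_erase h')
            · rw [Finset.mem_singleton] at h'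
              omega
          have hcp1 : c + 1 ≠ s + r := by
            intro he
            exact hcN (Finset.mem_union_left _ (Finset.mem_erase.mpr ⟨by omega, he ▸ hM⟩))
          have hcByp : c = a - 1 ∨ (c ∈ A ∧ c ≠ a) := by
            rcases Finset.mem_union.mp hcS with h' | h'
            · right
              exact ⟨Finset.mem_of_mem_erase h', (Finset.mem_erase.mp h').1⟩
            · left
              exact Finset.mem_singleton.mp h'
          have hcp1A : c + 1 ∉ A ∨ c + 1 = a := by
            by_cases h' : c + 1 = a
            · right; exact h'
            · left
              intro h''
              exact hcN (Finset.mem_union_left _ (Finset.mem_erase.mpr ⟨h', h''⟩))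
          have hcp1a : c + 1 ≠ a - 1 :=
            fun he => hcN (Finset.mem_union_right _ (Finset.mem_singleton.mpr he))
          right
          refine ⟨a, c, ?_, by omega, ?_, ?_, ?_, ?_⟩
          · exact Finset.mem_union_left _ (Finset.mem_erase.mpr ⟨haM, haA⟩)
          · intro h
            rcases Finset.mem_union.mp h with h' | h'
            · exact haN (Finset.mem_of_mem_erase h')
            · rw [Finset.mem_singleton] at h'
              omega
          · rcases hcByp with h' | h'
            · rw [h']
              exact Finset.mem_union_right _ (Finset.mem_singleton_self _)
            · exact Finset.mem_union_left _ (Finset.mem_erase.mpr ⟨h'.2,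
                Finset.mem_union_left _ (Finset.mem_erase.mpr ⟨hcM, h'.1⟩)⟩)
          · intro h
            rcases Finset.mem_union.mp h with h' | h'
            · have h'' := Finset.mem_of_mem_erase h'
              rcases Finset.mem_union.mp h'' with h3 | h3
              · have h4 := Finset.mem_erase.mp h3
                rcases hcp1A with h5 | h5
                · exact h5 h4.2
                · exact (Finset.mem_erase.mp h').1 h5
              · rw [Finset.mem_singleton] at h3
                omega
            · rw [Finset.mem_singleton] at h'
              exact hcp1a h'
          · rw [hBe]
            ext z
            simp only [Finset.mem_union, Finset.mem_erase, Finset.mem_singleton]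
            by_cases hzA : z ∈ A
            · have f1 : z ≠ s := fun h => hsA (h ▸ hzA)
              have f2 : z ≤ s + r := hmax z hzA
              have f3 : z ≠ a - 1 := fun h => haN (h ▸ hzA)
              simp only [hzA, and_true, true_and, iff_true, iff_false]
              omega
            · have f1 : z ≠ s + r := fun h => hzA (h ▸ hM)
              have f2 : z ≠ a := fun h => hzA (h ▸ haA)
              simp only [hzA, and_false, false_and, false_or, or_false, iff_true, iff_false]
              omega

/-! ### main induction -/

theorem chi_mem_aux (v : ℤ) (k : ℕ) (h : v = 0 ∨ v = 1 ∨ v = -1) :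
    (-1 : ℤ) ^ k * v = 0 ∨ (-1 : ℤ) ^ k * v = 1 ∨ (-1 : ℤ) ^ k * v = -1 := by
  have h1 : (-1 : ℤ) ^ k = 1 ∨ (-1 : ℤ) ^ k = -1 := by
    rcases Nat.even_or_odd k with hk | hk
    · exact Or.inl hk.neg_one_pow
    · exact Or.inr hk.neg_one_pow
  rcases h with h | h | h <;> rcases h1 with h1 | h1 <;> rw [h, h1] <;> norm_num

theorem mem_P {l : List ℕ} {T y : ℕ} :
    y ∈ P l T ↔ (∃ x ∈ betaSet l, y = x + (T - l.length)) ∨ y < T - l.length := by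
  unfold P padB
  rw [betaSet_length]
  simp [eq_comm]

theorem main (d : ℕ) : ∀ (ρ τ : List ℕ) (T : ℕ), IsPartition ρ → IsPartition τ →
    durfee ρ = d → ρ.length < T → τ.length < T → Rel (P ρ T) (P τ T) →
    chi τ (hat ρ) = 0 ∨ chi τ (hat ρ) = 1 ∨ chi τ (hat ρ) = -1 := by
  induction d with
  | zero =>
      intro ρ τ T hρ hτ hd _ _ _
      have hρnil : ρ = [] := by
        rcases ρ with _ | ⟨a, m⟩
        · rfl
        · exfalso
          have h0 : (0:ℕ) < durfee (a :: m) := (lt_durfee_iff hρ).mpr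
            (by rw [part_cons_zero]; exact (isPartition_cons hρ).2.1)
          omega
      subst hρnil
      have hhat : hat [] = [] := rfl
      rw [hhat]
      by_cases hτn : τ = [] <;> simp [chi, hτn]
  | succ d ih =>
      intro ρ τ T hρ hτ hd hρT hτT hrel
      have hρne : ρ ≠ [] := by
        intro h
        subst h
        simp [durfee] at hd
      set r := betaEntry ρ 0 with hrdef
      have hρlen : 0 < ρ.length := List.length_pos_iff.mpr hρne
      have hr1 : 1 ≤ r := by
        have := part_pos hρ hρlen
        rw [hrdef]
        unfold betaEntry
        omega
      set s := T - ρ.length with hsdef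
      set st := T - τ.length with hstdef
      have hs1 : 1 ≤ s := by omega
      -- facts about A = P ρ T
      have hdense : ∀ k, k < s → k ∈ P ρ T := by
        intro k hk
        exact mem_P.mpr (Or.inr (by omega))
      have hsA : s ∉ P ρ T := by
        intro h
        rcases mem_P.mp h with ⟨w, hw, he⟩ | h'
        · have := mem_betaSet_pos hρ hw
          omega
        · omega
      have hM : s + r ∈ P ρ T :=
        mem_P.mpr (Or.inl ⟨r, head_mem_betaSet hρne, by omega⟩)
      have hmax : ∀ w ∈ P ρ T, w ≤ s + r := by
        intro w hw
        rcases mem_P.mp hw with ⟨v, hv, he⟩ | h'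
        · have := mem_betaSet_le hρ hv
          rw [← hrdef] at this
          omega
        · omega
      rw [hat_cons hρ hρne, ← hrdef]
      rw [chi]
      set F := (betaSet τ).filter (fun x => decide (r ≤ x ∧ (x - r) ∉ betaSet τ)) with hFdef
      have hFmem : ∀ x ∈ F, x ∈ betaSet τ ∧ r ≤ x ∧ (x - r) ∉ betaSet τ := by
        intro x hx
        have h1 := List.mem_filter.mp hx
        exact ⟨h1.1, of_decide_eq_true h1.2⟩
      have hpadded : ∀ x, x ∈ betaSet τ → r ≤ x → (x - r) ∉ betaSet τ →
          (x + st ∈ P τ T ∧ r ≤ x + st ∧ (x + st) - r ∉ P τ T) := by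
        intro x hxB hrx hxrB
        refine ⟨mem_P.mpr (Or.inl ⟨x, hxB, rfl⟩), by omega, ?_⟩
        intro h
        have he : (x + st) - r = (x - r) + st := by omega
        rw [he] at h
        rcases mem_P.mp h with ⟨w, hw, hwe⟩ | h'
        · have : w = x - r := by omega
          exact hxrB (this ▸ hw)
        · omega
      rcases hFe : F with _ | ⟨x, F'⟩
      · left
        rfl
      · rcases F' with _ | ⟨x₂, F''⟩
        · -- exactly one removable hook
          have hxF : x ∈ F := by rw [hFe]; exact List.mem_cons_self
          obtain ⟨hxB, hrx, hxrB⟩ := hFmem x hxF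
          obtain ⟨hp1, hp2, hp3⟩ := hpadded x hxB hrx hxrB
          obtain ⟨hτ'p, hτ'len, hτ'P⟩ := removeHook_facts hτ hxB hrx hr1 hxrB
          -- ρ side
          have h0B : r - r ∉ betaSet ρ := by
            intro h
            have := mem_betaSet_pos hρ h
            omega
          obtain ⟨_, hρ'len0, hρ'P⟩ :=
            removeHook_facts hρ (head_mem_betaSet hρne) (le_refl r) hr1 h0B
          rw [removeHook_head hρ hρne] at hρ'P hρ'len0
          have hrel' : Rel (P (stripRC ρ) T) (P (removeHook τ x r) T) := by
            rw [hρ'P T (by omega), hτ'P T (by omega)]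
            have e1 : (P ρ T).erase (r + (T - ρ.length)) ∪ {r - r + (T - ρ.length)}
                = (P ρ T).erase (s + r) ∪ {s} := by
              rw [show r + (T - ρ.length) = s + r by omega,
                show r - r + (T - ρ.length) = s by omega]
            have e2 : (P τ T).erase (x + (T - τ.length)) ∪ {x - r + (T - τ.length)}
                = (P τ T).erase (x + st) ∪ {(x + st) - r} := by
              rw [show x + (T - τ.length) = x + st by omega,
                show x - r + (T - τ.length) = (x + st) - r by omega]
            rw [e1, e2]
            exact key_b hr1 hs1 hdense hsA hM hmax hrel hp1 hp2 hp3
          have hres := ih (stripRC ρ) (removeHook τ x r) T (isPartition_stripRC hρ) hτ'p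
            (by have := durfee_stripRC hρ hρne; omega)
            (by have := length_stripRC_le ρ; omega)
            (by omega)
            hrel'
          simp only [List.map_cons, List.map_nil, List.sum_cons, List.sum_nil, add_zero]
          exact chi_mem_aux _ _ hres
        · -- two removable hooks : impossible
          exfalso
          have hnd : F.Nodup := (betaSet_nodup hτ).filter _
          rw [hFe] at hnd
          have hne : x ≠ x₂ := by
            have := List.nodup_cons.mp hnd
            intro he
            exact this.1 (he ▸ List.mem_cons_self)
          have hx1F : x ∈ F := by rw [hFe]; exact List.mem_cons_self
          have hx2F : x₂ ∈ F := by
            rw [hFe]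
            exact List.mem_cons_of_mem _ (List.mem_cons_self)
          obtain ⟨h1B, h1r, h1rB⟩ := hFmem x hx1F
          obtain ⟨h2B, h2r, h2rB⟩ := hFmem x₂ hx2F
          obtain ⟨q1, q2, q3⟩ := hpadded x h1B h1r h1rB
          obtain ⟨w1, w2, w3⟩ := hpadded x₂ h2B h2r h2rB
          have := key_a hr1 hs1 hdense hsA hmax hrel q1 q2 q3 w1 w2 w3
          omega
end Stmt11Aux

/-- For every `τ ∈ N(ρ, 1)` (move one removable box of `ρ` to an addable position),
the character value `χ^τ(\hat ρ)` is `0`, `1` or `-1`. -/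
theorem stmt_11 (n : ℕ) (ρ : List ℕ) (hρ : IsPartition ρ) (hρn : ρ.sum = n) :
    ∀ τ, InN1 ρ τ →
      chi τ (hat ρ) = 0 ∨ chi τ (hat ρ) = 1 ∨ chi τ (hat ρ) = -1 := by
  intro τ hτN
  obtain ⟨σ, ⟨hρp, x₁, hx₁B, hx₁1, hx₁rB, hσ1⟩, ⟨hτp, x₂, hx₂B, hx₂1, hx₂rB, hσ2⟩⟩ := hτN
  set T := max ρ.length τ.length + 1 with hT
  have hρT : ρ.length < T := by
    have := le_max_left ρ.length τ.length
    omega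
  have hτT : τ.length < T := by
    have := le_max_right ρ.length τ.length
    omega
  obtain ⟨_, _, hP1⟩ := Stmt11Aux.removeHook_facts hρ hx₁B hx₁1 (le_refl 1) hx₁rB
  obtain ⟨_, _, hP2⟩ := Stmt11Aux.removeHook_facts hτp hx₂B hx₂1 (le_refl 1) hx₂rB
  set a := x₁ + (T - ρ.length) with hadef
  set b := x₂ + (T - τ.length) with hbdef
  have hPσ1 : Stmt11Aux.P σ T = (Stmt11Aux.P ρ T).erase a ∪ {a - 1} := by
    rw [← hσ1, hP1 T (by omega), show x₁ - 1 + (T - ρ.length) = a - 1 by omega]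
  have hPσ2 : Stmt11Aux.P σ T = (Stmt11Aux.P τ T).erase b ∪ {b - 1} := by
    rw [← hσ2, hP2 T (by omega), show x₂ - 1 + (T - τ.length) = b - 1 by omega]
  have haA : a ∈ Stmt11Aux.P ρ T := Stmt11Aux.mem_P.mpr (Or.inl ⟨x₁, hx₁B, rfl⟩)
  have ha1 : 1 ≤ a := by omega
  have haN : a - 1 ∉ Stmt11Aux.P ρ T := by
    intro h
    have he : a - 1 = (x₁ - 1) + (T - ρ.length) := by omega
    rw [he] at h
    rcases Stmt11Aux.mem_P.mp h with ⟨w, hw, hwe⟩ | h'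
    · have hwx : w = x₁ - 1 := by omega
      exact hx₁rB (hwx ▸ hw)
    · omega
  have hbB : b ∈ Stmt11Aux.P τ T := Stmt11Aux.mem_P.mpr (Or.inl ⟨x₂, hx₂B, rfl⟩)
  have hb1 : 1 ≤ b := by omega
  have hbN : b - 1 ∉ Stmt11Aux.P τ T := by
    intro h
    have he : b - 1 = (x₂ - 1) + (T - τ.length) := by omega
    rw [he] at h
    rcases Stmt11Aux.mem_P.mp h with ⟨w, hw, hwe⟩ | h'
    · have hwx : w = x₂ - 1 := by omega
      exact hx₂rB (hwx ▸ hw)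
    · omega
  have hS : (Stmt11Aux.P ρ T).erase a ∪ {a - 1} = (Stmt11Aux.P τ T).erase b ∪ {b - 1} := by
    rw [← hPσ1, ← hPσ2]
  have hrel : Stmt11Aux.Rel (Stmt11Aux.P ρ T) (Stmt11Aux.P τ T) := by
    right
    refine ⟨a, b - 1, haA, ha1, haN, ?_, ?_, ?_⟩
    · rw [hS]
      exact Finset.mem_union_right _ (Finset.mem_singleton_self _)
    · rw [hS, show b - 1 + 1 = b by omega]
      intro h
      rcases Finset.mem_union.mp h with h' | h'
      · exact (Finset.mem_erase.mp h').1 rfl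
      · rw [Finset.mem_singleton] at h'
        omega
    · rw [hS, show b - 1 + 1 = b by omega]
      ext z
      simp only [Finset.mem_union, Finset.mem_erase, Finset.mem_singleton]
      constructor
      · intro hz
        by_cases hzb : z = b
        · exact Or.inr hzb
        · exact Or.inl ⟨fun h => hbN (h ▸ hz), Or.inl ⟨hzb, hz⟩⟩
      · rintro (⟨h1, ⟨_, h2⟩ | h3⟩ | rfl)
        · exact h2
        · exact absurd h3 h1
        · exact hbB
  exact Stmt11Aux.main (durfee ρ) ρ τ T hρ hτp rfl hρT hτT hrel
end

section
/- Let $\rho_m = (m, m-1, \ldots, 2, 1)$ be the staircase partition of $n = m(m+1)/2$, with principal hook partition $\hat\rho_m = (2m-1, 2m-5, 2m-9, \ldots)$. For every partition $\tau \in N(\rho_m, 1)$ (obtained by moving a single removable box of $\rho_m$ to an addable position), $\chi^{\tau}(\hat\rho_m) \neq 0$ if and only if the principal hook partition of $\tau$ equals $\hat\rho_m$, in which case $\chi^{\tau}(\hat\rho_m) = \pm 1$. -/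
/-- The staircase partition `ρ_m = (m, m-1, …, 1)`. -/
def staircase (m : ℕ) : List ℕ := (List.range m).map fun i => m - i
section Infra
open List

/-! ### Generic list infrastructure -/

lemma part_map_range (f : ℕ → ℕ) {L i : ℕ} (h : i < L) :
    part ((List.range L).map f) i = f i := by
  have hi : i < ((List.range L).map f).length := by simpa using h
  rw [part, List.getD_eq_getElem _ 0 hi]
  simp

lemma part_ge {l : List ℕ} {i : ℕ} (h : l.length ≤ i) : part l i = 0 := by
  rw [part, List.getD_eq_default]
  exact h

lemma mem_map_range {f : ℕ → ℕ} {L x : ℕ} :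
    x ∈ (List.range L).map f ↔ ∃ i, i < L ∧ f i = x := by
  simp [List.mem_map]

lemma self_eq_map_range (l : List ℕ) :
    l = (List.range l.length).map (fun i => part l i) := by
  apply List.ext_getElem (by simp)
  intro i h1 h2
  rw [List.getElem_map, List.getElem_range, part, List.getD_eq_getElem l 0 h1]

lemma filter_range_eq_range {q : ℕ → Bool} {L c : ℕ}
    (hc : c ≤ L) (h : ∀ i < L, q i = true ↔ i < c) :
    (List.range L).filter q = List.range c := by
  induction L with
  | zero => simp; omega
  | succ n ih =>
    rw [List.range_succ, List.filter_append]
    rcases Nat.lt_or_ge c (n+1) with hlt | hge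
    · have hqn : q n = false := by
        rcases Bool.eq_false_or_eq_true (q n) with h' | h'
        · exact absurd ((h n (by omega)).1 h') (by omega)
        · exact h'
      rw [ih (by omega) (fun i hi => by rw [h i (by omega)])]
      simp [hqn]
    · have hc' : c = n + 1 := by omega
      subst hc'
      have hqn : q n = true := (h n (by omega)).2 (by omega)
      rw [List.filter_eq_self.mpr, List.range_succ]
      · simp [hqn]
      · intro a ha
        exact (h a (by simp at ha; omega)).2 (by simp at ha; omega)

lemma filter_range_eq_single {q : ℕ → Bool} {L i0 : ℕ}
    (hi : i0 < L) (h : ∀ i < L, q i = true ↔ i = i0) :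
    (List.range L).filter q = [i0] := by
  induction L with
  | zero => omega
  | succ n ih =>
    rw [List.range_succ, List.filter_append]
    rcases Nat.lt_or_ge i0 n with hlt | hge
    · have hqn : q n = false := by
        rcases Bool.eq_false_or_eq_true (q n) with h' | h'
        · exact absurd ((h n (by omega)).1 h') (by omega)
        · exact h'
      rw [ih hlt (fun i hi => by rw [h i (by omega)])]
      simp [hqn]
    · have hi0 : i0 = n := by omega
      subst hi0
      have hqn : q i0 = true := (h i0 (by omega)).2 rfl
      rw [List.filter_eq_nil_iff.mpr, List.filter_cons_of_pos hqn]
      · simp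
      · intro a ha
        simp only [List.mem_range] at ha
        intro hqa
        exact absurd ((h a (by omega)).1 hqa) (by omega)

lemma filter_range_eq_nil {q : ℕ → Bool} {L : ℕ}
    (h : ∀ i < L, q i = false) :
    (List.range L).filter q = [] := by
  have := filter_range_eq_range (q := q) (c := 0) (L := L) (by omega)
    (fun i hi => by simp [h i hi])
  simpa using this

lemma conjPart_map_range {f : ℕ → ℕ} {L j c : ℕ}
    (hc : c ≤ L) (h : ∀ i < L, j < f i ↔ i < c) :
    conjPart ((List.range L).map f) j = c := by
  rw [conjPart, List.filter_map,
    filter_range_eq_range hc (fun i hi => by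
      simpa using h i hi)]
  simp

lemma durfee_map_range {f : ℕ → ℕ} {L c : ℕ}
    (hc : c ≤ L) (h : ∀ i < L, i < f i ↔ i < c) :
    durfee ((List.range L).map f) = c := by
  rw [durfee]
  have hl : ((List.range L).map f).length = L := by simp
  rw [hl]
  have hcongr : List.filter (fun i => decide (i < part ((List.range L).map f) i)) (List.range L)
      = List.filter (fun i => decide (i < f i)) (List.range L) := by
    apply List.filter_congr
    intro x hx
    simp only [List.mem_range] at hx
    simp [part_map_range f hx]
  rw [hcongr, filter_range_eq_range hc (fun i hi => by simpa using h i hi)]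
  simp

lemma betaSet_map_range (f : ℕ → ℕ) (L : ℕ) :
    betaSet ((List.range L).map f) =
      (List.range L).map (fun i => f i + (L - 1 - i)) := by
  rw [betaSet]
  have hl : ((List.range L).map f).length = L := by simp
  rw [hl]
  apply List.map_congr_left
  intro i hi
  simp only [List.mem_range] at hi
  rw [betaEntry, part_map_range f hi, hl]

lemma sorted_ge_map_range {g : ℕ → ℕ} {L : ℕ}
    (h : ∀ i j, i < j → j < L → g j ≤ g i) :
    ((List.range L).map g).Pairwise (· ≥ ·) := by
  rw [List.pairwise_iff_getElem]
  intro i j hi hj hij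
  simp only [List.length_map, List.length_range] at hi hj
  simp only [List.getElem_map, List.getElem_range]
  exact h i j hij hj

lemma sortDesc_eq {l l' : List ℕ} (hp : l.Perm l') (hs : l'.Pairwise (· ≥ ·)) :
    sortDesc l = l' := by
  refine List.Perm.eq_of_pairwise' (List.pairwise_insertionSort _ l) hs ?_
  exact (List.perm_insertionSort _ l).trans hp

lemma map_range_succ_head (f : ℕ → ℕ) (L : ℕ) :
    (List.range (L+1)).map f = f 0 :: (List.range L).map (fun i => f (i+1)) := by
  rw [List.range_succ_eq_map]
  simp [Function.comp]

lemma map_range_snoc (g : ℕ → ℕ) (L : ℕ) :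
    (List.range (L+1)).map g = (List.range L).map g ++ [g L] := by
  rw [List.range_succ]
  simp

lemma map_range_split (F : ℕ → ℕ) {k L : ℕ} (h : k < L) :
    (List.range L).map F =
      (List.range k).map F ++ F k :: (List.range (L - 1 - k)).map (fun i => F (i + k + 1)) := by
  have h1 : L = (k+1) + (L - 1 - k) := by omega
  rw [h1, List.range_add, List.map_append, map_range_snoc, List.map_map, List.append_assoc,
    List.singleton_append]
  rw [show k + 1 + (L - 1 - k) - 1 - k = L - 1 - k by omega]
  congr 2
  apply List.map_congr_left
  intro a _
  simp only [Function.comp]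
  congr 1
  omega

lemma partOfBeta_map_range {f : ℕ → ℕ} {L c : ℕ}
    (hc : c ≤ L) (h : ∀ i < L, 0 < f i - (L - 1 - i) ↔ i < c) :
    partOfBeta ((List.range L).map f) =
      (List.range c).map (fun i => f i - (L - 1 - i)) := by
  rw [partOfBeta]
  have hl : ((List.range L).map f).length = L := by simp
  rw [hl]
  rw [List.map_congr_left (g := fun i => f i - (L - 1 - i)) (fun i hi => by
    simp only [List.mem_range] at hi
    rw [part_map_range f hi])]
  rw [List.filter_map, filter_range_eq_range hc (fun i hi => by simpa using h i hi)]

/-- filter of positives of a weakly decreasing list, with tail zero. -/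
lemma sorted_filter_pos (v : List ℕ) (hv : v.Pairwise (· ≥ ·)) :
    (v.filter fun x => decide (0 < x)) =
      v.take ((v.filter fun x => decide (0 < x)).length) ∧
      ∀ i, (h : i < v.length) → (v.filter fun x => decide (0 < x)).length ≤ i → v[i] = 0 := by
  induction v with
  | nil => simp
  | cons a t ih =>
    rw [List.pairwise_cons] at hv
    obtain ⟨ha, ht⟩ := hv
    rcases Nat.eq_zero_or_pos a with h0 | h0
    · have htz : ∀ b ∈ t, b = 0 := fun b hb => by have := ha b hb; omega
      have hft : (t.filter fun x => decide (0 < x)) = [] := by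
        rw [List.filter_eq_nil_iff]
        intro b hb
        simp [htz b hb]
      have hfa : ((a :: t).filter fun x => decide (0 < x)) = [] := by
        rw [List.filter_cons_of_neg (by simp [h0]), hft]
      rw [hfa]
      refine ⟨by simp, ?_⟩
      intro i hi _
      rcases i with _ | i
      · simpa using h0
      · simp only [List.getElem_cons_succ]
        exact htz _ (List.getElem_mem _)
    · obtain ⟨ih1, ih2⟩ := ih ht
      have hfa : ((a :: t).filter fun x => decide (0 < x)) =
          a :: (t.filter fun x => decide (0 < x)) := List.filter_cons_of_pos (by simp [h0])
      rw [hfa]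
      constructor
      · simp only [List.length_cons, List.take_succ_cons]
        rw [← ih1]
      · intro i hi hle
        rcases i with _ | i
        · simp at hle
        · simp only [List.getElem_cons_succ]
          exact ih2 i (by simpa using hi) (by simpa using hle)

lemma neg_one_pow_mul_pm (k : ℕ) (v : ℤ) (h : v = 1 ∨ v = -1) :
    (-1 : ℤ) ^ k * v = 1 ∨ (-1 : ℤ) ^ k * v = -1 := by
  have h2 : (-1 : ℤ) ^ k = 1 ∨ (-1 : ℤ) ^ k = -1 := by
    rcases Nat.even_or_odd k with hk | hk
    · exact Or.inl hk.neg_one_pow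
    · exact Or.inr hk.neg_one_pow
  rcases h2 with h2 | h2 <;> rcases h with h | h <;> rw [h2, h] <;> norm_num

end Infra
section ChiStep

lemma chi_nil (l : List ℕ) : chi l [] = if l = [] then 1 else 0 := by rw [chi]

lemma chi_cons (l : List ℕ) (r : ℕ) (μ : List ℕ) : chi l (r :: μ) =
    (((betaSet l).filter fun x => decide (r ≤ x ∧ (x - r) ∉ betaSet l)).map
        fun x => (-1 : ℤ) ^ legLen (betaSet l) x r * chi (removeHook l x r) μ).sum := by
  rw [chi]

lemma chi_step_single {l : List ℕ} {r x : ℕ} (μ : List ℕ)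
    (h : (betaSet l).filter (fun x => decide (r ≤ x ∧ (x - r) ∉ betaSet l)) = [x]) :
    chi l (r :: μ) = (-1 : ℤ) ^ legLen (betaSet l) x r * chi (removeHook l x r) μ := by
  rw [chi_cons, h]
  simp

lemma chi_step_none {l : List ℕ} {r : ℕ} (μ : List ℕ)
    (h : (betaSet l).filter (fun x => decide (r ≤ x ∧ (x - r) ∉ betaSet l)) = []) :
    chi l (r :: μ) = 0 := by
  rw [chi_cons, h]
  simp

end ChiStep

section Shapes

/-- `ρ_m` with the box in row `k` moved to row `p` (`p ∉ {k, k+1}`, `k ≤ m-2`, `p ≤ m-1`). -/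
def Tmid (m k p : ℕ) : List ℕ :=
  (List.range m).map (fun i => if i = k then m - i - 1 else if i = p then m - i + 1 else m - i)

/-- `ρ_m` with the last row removed and a box added in row `p ≤ m-2`. -/
def Trow (m p : ℕ) : List ℕ :=
  (List.range (m-1)).map (fun i => if i = p then m - i + 1 else m - i)

/-- `ρ_m` with the box in row `k ≤ m-2` moved to a new row of length 1. -/
def Tnew (m k : ℕ) : List ℕ :=
  (List.range (m+1)).map (fun i => if i = k then m - i - 1 else if i = m then 1 else m - i)

/-- The principal hook partition of the staircase, as an explicit list. -/
def hatL (m : ℕ) : List ℕ := (List.range ((m+1)/2)).map (fun i => 2*m - 4*i - 1)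

lemma betaSet_staircase (m : ℕ) :
    betaSet (staircase m) = (List.range m).map (fun i => 2*m - 2*i - 1) := by
  rw [staircase, betaSet_map_range]
  apply List.map_congr_left
  intro i hi
  simp only [List.mem_range] at hi
  omega

lemma betaSet_Tmid {m k p : ℕ} (hk : k + 2 ≤ m) (hp : p + 1 ≤ m) :
    betaSet (Tmid m k p) = (List.range m).map
      (fun i => if i = k then 2*m - 2*i - 2 else if i = p then 2*m - 2*i else 2*m - 2*i - 1) := by
  rw [Tmid, betaSet_map_range]
  apply List.map_congr_left
  intro i hi
  simp only [List.mem_range] at hi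
  split_ifs <;> omega

lemma betaSet_Trow {m p : ℕ} (hp : p + 2 ≤ m) :
    betaSet (Trow m p) = (List.range (m-1)).map
      (fun i => if i = p then 2*m - 2*i - 1 else 2*m - 2*i - 2) := by
  rw [Trow, betaSet_map_range]
  apply List.map_congr_left
  intro i hi
  simp only [List.mem_range] at hi
  split_ifs <;> omega

lemma betaSet_Tnew {m k : ℕ} (hk : k + 2 ≤ m) :
    betaSet (Tnew m k) = (List.range (m+1)).map
      (fun i => if i = k then 2*m - 2*i - 1 else if i = m then 1 else 2*m - 2*i) := by
  rw [Tnew, betaSet_map_range]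
  apply List.map_congr_left
  intro i hi
  simp only [List.mem_range] at hi
  split_ifs <;> omega

lemma staircase_eq_map (m : ℕ) : staircase m = (List.range m).map (fun i => m - i) := rfl

lemma hat_staircase (m : ℕ) : hat (staircase m) = hatL m := by
  rw [hat, hatL, staircase]
  have hd : durfee ((List.range m).map (fun i => m - i)) = (m+1)/2 := by
    apply durfee_map_range (by omega)
    intro i hi
    omega
  rw [← staircase, staircase]
  rw [hd]
  apply List.map_congr_left
  intro i hi
  simp only [List.mem_range] at hi
  have hc : conjPart ((List.range m).map (fun j => m - j)) i = m - i := by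
    apply conjPart_map_range (by omega)
    intro j hj
    omega
  rw [hookLen, part_map_range _ (by omega : i < m), hc]
  omega

lemma hatL_succ {m : ℕ} (h : 2 ≤ m) : hatL m = (2*m - 1) :: hatL (m - 2) := by
  rw [hatL, hatL]
  have h1 : (m+1)/2 = (m - 2 + 1)/2 + 1 := by omega
  rw [h1, map_range_succ_head]
  congr 1
  apply List.map_congr_left
  intro i hi
  simp only [List.mem_range] at hi
  omega

end Shapes
section ChiCompute

lemma filter_beta_single {F : ℕ → ℕ} {L r i0 x : ℕ} (hi0 : i0 < L) (hx : F i0 = x)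
    (h : ∀ i, i < L → ((r ≤ F i ∧ ¬∃ j, j < L ∧ F j = F i - r) ↔ i = i0)) :
    ((List.range L).map F).filter
      (fun x => decide (r ≤ x ∧ (x - r) ∉ (List.range L).map F)) = [x] := by
  subst hx
  have hq : ∀ i, i < L →
      (((fun x => decide (r ≤ x ∧ (x - r) ∉ (List.range L).map F)) ∘ F) i = true ↔ i = i0) := by
    intro i hi
    simp only [Function.comp_apply, decide_eq_true_eq, mem_map_range]
    rw [← h i hi]
  rw [List.filter_map, filter_range_eq_single hi0 hq]
  rfl

lemma filter_beta_nil {F : ℕ → ℕ} {L r : ℕ}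
    (h : ∀ i, i < L → ¬(r ≤ F i ∧ ¬∃ j, j < L ∧ F j = F i - r)) :
    ((List.range L).map F).filter
      (fun x => decide (r ≤ x ∧ (x - r) ∉ (List.range L).map F)) = [] := by
  have hq : ∀ i, i < L →
      (((fun x => decide (r ≤ x ∧ (x - r) ∉ (List.range L).map F)) ∘ F) i = false) := by
    intro i hi
    simp only [Function.comp_apply, decide_eq_false_iff_not, mem_map_range]
    have := h i hi
    tauto
  rw [List.filter_map, filter_range_eq_nil hq]
  rfl

lemma removeHook_head {l : List ℕ} (F G : ℕ → ℕ) {L r c x : ℕ}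
    (hL : 1 ≤ L) (hx : F 0 = x) (hbeta : betaSet l = (List.range L).map F)
    (hG0 : G (L-1) = F 0 - r) (hG1 : ∀ i, i + 1 < L → G i = F (i+1))
    (hsorted : ∀ i j, i < j → j < L → G j ≤ G i)
    (hc : c ≤ L) (hpos : ∀ i, i < L → (0 < G i - (L - 1 - i) ↔ i < c)) :
    removeHook l x r = (List.range c).map (fun i => G i - (L - 1 - i)) := by
  subst hx
  obtain ⟨L', rfl⟩ : ∃ L', L = L' + 1 := ⟨L - 1, by omega⟩
  rw [removeHook, hbeta, map_range_succ_head, List.erase_cons_head]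
  have htarget : (List.range L').map (fun i => F (i+1)) ++ [F 0 - r] =
      (List.range (L'+1)).map G := by
    rw [map_range_snoc]
    congr 1
    · apply List.map_congr_left
      intro i hi
      simp only [List.mem_range] at hi
      rw [hG1 i (by omega)]
    · rw [show L' + 1 - 1 = L' from rfl] at hG0
      rw [hG0]
  have hperm : ((F 0 - r) :: (List.range L').map (fun i => F (i+1))).Perm
      ((List.range (L'+1)).map G) :=
    htarget ▸ (List.perm_append_singleton _ _).symm
  rw [sortDesc_eq hperm (sorted_ge_map_range hsorted)]
  exact partOfBeta_map_range hc hpos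

end ChiCompute
section ChiTrans

lemma chi_staircase_step {m : ℕ} (hm : 2 ≤ m) (μ : List ℕ) :
    ∃ e : ℕ, chi (staircase m) ((2*m-1) :: μ) = (-1 : ℤ)^e * chi (staircase (m-2)) μ := by
  have hbeta := betaSet_staircase m
  have hfil : (betaSet (staircase m)).filter
      (fun x => decide (2*m-1 ≤ x ∧ (x - (2*m-1)) ∉ betaSet (staircase m))) = [2*m-1] := by
    rw [hbeta]
    apply filter_beta_single (i0 := 0) (by omega) (by omega)
    intro i hi
    constructor
    · rintro ⟨h1, -⟩
      omega
    · rintro rfl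
      refine ⟨by omega, ?_⟩
      rintro ⟨j, hj, hfj⟩
      omega
  have hrem : removeHook (staircase m) (2*m-1) (2*m-1) = staircase (m-2) := by
    have := removeHook_head (l := staircase m) (fun i => 2*m-2*i-1)
      (fun i => if i = m-1 then 0 else 2*m-2*(i+1)-1)
      (L := m) (r := 2*m-1) (c := m-2) (x := 2*m-1)
      (by omega) (by beta_reduce; omega) hbeta
      (by simp) (fun i hi => by beta_reduce; rw [if_neg (by omega : ¬ i = m-1)])
      (fun i j hij hj => by beta_reduce; split_ifs <;> omega)
      (by omega) (fun i hi => by beta_reduce; split_ifs <;> omega)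
    rw [this, staircase_eq_map]
    apply List.map_congr_left
    intro i hi
    simp only [List.mem_range] at hi
    beta_reduce
    split_ifs <;> omega
  exact ⟨_, by rw [chi_step_single μ hfil, hrem]⟩

lemma chi_rho : ∀ m : ℕ, chi (staircase m) (hatL m) = 1 ∨ chi (staircase m) (hatL m) = -1 := by
  intro m
  induction m using Nat.strong_induction_on with
  | _ m ih =>
    rcases Nat.lt_or_ge m 2 with hm | hm
    · interval_cases m
      · left
        have h0 : staircase 0 = [] := rfl
        have h1 : hatL 0 = [] := rfl
        rw [h0, h1, chi_nil]
        simp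
      · left
        have h0 : staircase 1 = [1] := by decide
        have h1 : hatL 1 = [1] := by decide
        rw [h0, h1]
        rw [chi_step_single (l := [1]) (r := 1) (x := 1) [] (by decide)]
        rw [show removeHook [1] 1 1 = [] by decide, chi_nil,
          show legLen (betaSet [1]) 1 1 = 0 by decide]
        norm_num
    · rw [hatL_succ hm]
      obtain ⟨e, he⟩ := chi_staircase_step hm (hatL (m-2))
      rw [he]
      exact neg_one_pow_mul_pm e _ (ih (m-2) (by omega))

end ChiTrans
section TmidTrans

lemma filter_Tmid {m k p : ℕ} (hk : k+2 ≤ m) (hp : p+1 ≤ m) (hk1 : 1 ≤ k) (hp1 : 1 ≤ p)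
    (hpk : p ≠ k) :
    (betaSet (Tmid m k p)).filter
      (fun x => decide (2*m-1 ≤ x ∧ (x - (2*m-1)) ∉ betaSet (Tmid m k p))) = [2*m-1] := by
  rw [betaSet_Tmid hk hp]
  apply filter_beta_single (i0 := 0) (by omega) (by beta_reduce; split_ifs <;> omega)
  intro i hi
  beta_reduce
  constructor
  · rintro ⟨h1, -⟩
    split_ifs at h1 <;> omega
  · rintro rfl
    refine ⟨by split_ifs <;> omega, ?_⟩
    rintro ⟨j, hj, hfj⟩
    split_ifs at hfj <;> omega

lemma remove_Tmid_a {m k p : ℕ} (hk : k+2 ≤ m) (hp : p+1 ≤ m) (hk1 : 1 ≤ k) (hp1 : 1 ≤ p)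
    (hpk : p ≠ k) (hpk1 : p ≠ k+1) (hka : k ≤ m-3) (hpa : p ≤ m-2) :
    removeHook (Tmid m k p) (2*m-1) (2*m-1) = Tmid (m-2) (k-1) (p-1) := by
  have := removeHook_head
    (fun i => if i = k then 2*m-2*i-2 else if i = p then 2*m-2*i else 2*m-2*i-1)
    (fun i => if i = m-1 then 0 else if i+1 = k then 2*m-2*i-4
              else if i+1 = p then 2*m-2*i-2 else 2*m-2*i-3)
    (L := m) (r := 2*m-1) (c := m-2) (x := 2*m-1)
    (by omega) (by beta_reduce; split_ifs <;> omega) (betaSet_Tmid hk hp)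
    (by beta_reduce; split_ifs <;> omega)
    (fun i hi => by beta_reduce; split_ifs <;> omega)
    (fun i j hij hj => by beta_reduce; split_ifs <;> omega)
    (by omega) (fun i hi => by beta_reduce; split_ifs <;> omega)
  rw [this, Tmid]
  apply List.map_congr_left
  intro i hi
  simp only [List.mem_range] at hi
  beta_reduce
  split_ifs <;> omega

lemma remove_Tmid_b {m p : ℕ} (hm : 4 ≤ m) (hp1 : 1 ≤ p) (hpa : p ≤ m-3) :
    removeHook (Tmid m (m-2) p) (2*m-1) (2*m-1) = Trow (m-2) (p-1) := by
  have := removeHook_head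
    (fun i => if i = m-2 then 2*m-2*i-2 else if i = p then 2*m-2*i else 2*m-2*i-1)
    (fun i => if i = m-1 then 0 else if i+1 = m-2 then 2*m-2*i-4
              else if i+1 = p then 2*m-2*i-2 else 2*m-2*i-3)
    (L := m) (r := 2*m-1) (c := m-3) (x := 2*m-1)
    (by omega) (by beta_reduce; split_ifs <;> omega) (betaSet_Tmid (by omega) (by omega))
    (by beta_reduce; split_ifs <;> omega)
    (fun i hi => by beta_reduce; split_ifs <;> omega)
    (fun i j hij hj => by beta_reduce; split_ifs <;> omega)
    (by omega) (fun i hi => by beta_reduce; split_ifs <;> omega)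
  rw [this, Trow]
  rw [show m - 2 - 1 = m - 3 by omega]
  apply List.map_congr_left
  intro i hi
  simp only [List.mem_range] at hi
  beta_reduce
  split_ifs <;> omega

lemma remove_Tmid_c {m k : ℕ} (hm : 4 ≤ m) (hk1 : 1 ≤ k) (hka : k ≤ m-3) :
    removeHook (Tmid m k (m-1)) (2*m-1) (2*m-1) = Tnew (m-2) (k-1) := by
  have := removeHook_head
    (fun i => if i = k then 2*m-2*i-2 else if i = m-1 then 2*m-2*i else 2*m-2*i-1)
    (fun i => if i = m-1 then 0 else if i+1 = k then 2*m-2*i-4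
              else if i+1 = m-1 then 2*m-2*i-2 else 2*m-2*i-3)
    (L := m) (r := 2*m-1) (c := m-1) (x := 2*m-1)
    (by omega) (by beta_reduce; split_ifs <;> omega) (betaSet_Tmid (by omega) (by omega))
    (by beta_reduce; split_ifs <;> omega)
    (fun i hi => by beta_reduce; split_ifs <;> omega)
    (fun i j hij hj => by beta_reduce; split_ifs <;> omega)
    (by omega) (fun i hi => by beta_reduce; split_ifs <;> omega)
  rw [this, Tnew]
  rw [show m - 2 + 1 = m - 1 by omega]
  apply List.map_congr_left
  intro i hi
  simp only [List.mem_range] at hi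
  beta_reduce
  split_ifs <;> omega

lemma chi_Tmid_zero1 {m p : ℕ} (hp2 : 2 ≤ p) (hp : p+1 ≤ m) (μ : List ℕ) :
    chi (Tmid m 0 p) ((2*m-1) :: μ) = 0 := by
  apply chi_step_none
  rw [betaSet_Tmid (by omega) hp]
  apply filter_beta_nil
  intro i hi
  beta_reduce
  rintro ⟨h1, -⟩
  split_ifs at h1 <;> omega

lemma chi_Tmid_zero2 {m k : ℕ} (hk1 : 1 ≤ k) (hk : k+2 ≤ m) (μ : List ℕ) :
    chi (Tmid m k 0) ((2*m-1) :: μ) = 0 := by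
  apply chi_step_none
  rw [betaSet_Tmid hk (by omega)]
  apply filter_beta_nil
  intro i hi
  beta_reduce
  rintro ⟨h1, h2⟩
  have hi0 : i = 0 := by split_ifs at h1 <;> omega
  subst hi0
  refine h2 ⟨m-1, by omega, ?_⟩
  split_ifs <;> omega

end TmidTrans
section RowNewTrans

lemma chi_Trow_zero {m p : ℕ} (hp1 : 1 ≤ p) (hp : p+2 ≤ m) (μ : List ℕ) :
    chi (Trow m p) ((2*m-1) :: μ) = 0 := by
  apply chi_step_none
  rw [betaSet_Trow hp]
  apply filter_beta_nil
  intro i hi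
  beta_reduce
  rintro ⟨h1, -⟩
  split_ifs at h1 <;> omega

lemma chi_Tnew_zero {m k : ℕ} (hk1 : 1 ≤ k) (hk : k+2 ≤ m) (μ : List ℕ) :
    chi (Tnew m k) ((2*m-1) :: μ) = 0 := by
  apply chi_step_none
  rw [betaSet_Tnew hk]
  apply filter_beta_nil
  intro i hi
  beta_reduce
  rintro ⟨h1, h2⟩
  have hi0 : i = 0 := by split_ifs at h1 <;> omega
  subst hi0
  refine h2 ⟨m, by omega, ?_⟩
  split_ifs <;> first | omega | (exfalso; assumption)

lemma chi_Trow0_step {m : ℕ} (hm : 2 ≤ m) (μ : List ℕ) :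
    ∃ e : ℕ, chi (Trow m 0) ((2*m-1) :: μ) = (-1 : ℤ)^e * chi (staircase (m-2)) μ := by
  have hfil : (betaSet (Trow m 0)).filter
      (fun x => decide (2*m-1 ≤ x ∧ (x - (2*m-1)) ∉ betaSet (Trow m 0))) = [2*m-1] := by
    rw [betaSet_Trow (by omega)]
    apply filter_beta_single (i0 := 0) (by omega) (by beta_reduce; split_ifs <;> first | omega | (exfalso; assumption))
    intro i hi
    beta_reduce
    constructor
    · rintro ⟨h1, -⟩
      split_ifs at h1 <;> omega
    · rintro rfl
      refine ⟨by split_ifs <;> first | omega | (exfalso; assumption), ?_⟩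
      rintro ⟨j, hj, hfj⟩
      split_ifs at hfj <;> omega
  have hrem : removeHook (Trow m 0) (2*m-1) (2*m-1) = staircase (m-2) := by
    have := removeHook_head
      (fun i => if i = 0 then 2*m-2*i-1 else 2*m-2*i-2)
      (fun i => if i = m-2 then 0 else 2*m-2*i-4)
      (L := m-1) (r := 2*m-1) (c := m-2) (x := 2*m-1)
      (by omega) (by beta_reduce; split_ifs <;> first | omega | (exfalso; assumption)) (betaSet_Trow (by omega))
      (by beta_reduce; split_ifs <;> first | omega | (exfalso; assumption))
      (fun i hi => by beta_reduce; split_ifs <;> first | omega | (exfalso; assumption))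
      (fun i j hij hj => by beta_reduce; split_ifs <;> first | omega | (exfalso; assumption))
      (by omega) (fun i hi => by beta_reduce; split_ifs <;> first | omega | (exfalso; assumption))
    rw [this, staircase_eq_map]
    apply List.map_congr_left
    intro i hi
    simp only [List.mem_range] at hi
    beta_reduce
    split_ifs <;> first | omega | (exfalso; assumption)
  exact ⟨_, by rw [chi_step_single μ hfil, hrem]⟩

lemma chi_Tnew0_step {m : ℕ} (hm : 2 ≤ m) (μ : List ℕ) :
    ∃ e : ℕ, chi (Tnew m 0) ((2*m-1) :: μ) = (-1 : ℤ)^e * chi (staircase (m-2)) μ := by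
  have hfil : (betaSet (Tnew m 0)).filter
      (fun x => decide (2*m-1 ≤ x ∧ (x - (2*m-1)) ∉ betaSet (Tnew m 0))) = [2*m-1] := by
    rw [betaSet_Tnew (by omega)]
    apply filter_beta_single (i0 := 0) (by omega) (by beta_reduce; split_ifs <;> first | omega | (exfalso; assumption))
    intro i hi
    beta_reduce
    constructor
    · rintro ⟨h1, -⟩
      split_ifs at h1 <;> omega
    · rintro rfl
      refine ⟨by split_ifs <;> first | omega | (exfalso; assumption), ?_⟩
      rintro ⟨j, hj, hfj⟩
      split_ifs at hfj <;> omega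
  have hrem : removeHook (Tnew m 0) (2*m-1) (2*m-1) = staircase (m-2) := by
    have := removeHook_head
      (fun i => if i = 0 then 2*m-2*i-1 else if i = m then 1 else 2*m-2*i)
      (fun i => if i = m then 0 else if i+1 = m then 1 else 2*m-2*i-2)
      (L := m+1) (r := 2*m-1) (c := m-2) (x := 2*m-1)
      (by omega) (by beta_reduce; split_ifs <;> first | omega | (exfalso; assumption)) (betaSet_Tnew (by omega))
      (by beta_reduce; split_ifs <;> first | omega | (exfalso; assumption))
      (fun i hi => by beta_reduce; split_ifs <;> first | omega | (exfalso; assumption))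
      (fun i j hij hj => by beta_reduce; split_ifs <;> first | omega | (exfalso; assumption))
      (by omega) (fun i hi => by beta_reduce; split_ifs <;> first | omega | (exfalso; assumption))
    rw [this, staircase_eq_map]
    apply List.map_congr_left
    intro i hi
    simp only [List.mem_range] at hi
    beta_reduce
    split_ifs <;> first | omega | (exfalso; assumption)
  exact ⟨_, by rw [chi_step_single μ hfil, hrem]⟩

lemma chi_Trow_main {m p : ℕ} (hp : p+2 ≤ m) :
    (p = 0 → (chi (Trow m p) (hatL m) = 1 ∨ chi (Trow m p) (hatL m) = -1)) ∧
    (p ≠ 0 → chi (Trow m p) (hatL m) = 0) := by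
  constructor
  · rintro rfl
    rw [hatL_succ (show 2 ≤ m by omega)]
    obtain ⟨e, he⟩ := chi_Trow0_step (m := m) (by omega) (hatL (m-2))
    rw [he]
    exact neg_one_pow_mul_pm e _ (chi_rho (m-2))
  · intro hp0
    rw [hatL_succ (show 2 ≤ m by omega)]
    exact chi_Trow_zero (by omega) hp _

lemma chi_Tnew_main {m k : ℕ} (hk : k+2 ≤ m) :
    (k = 0 → (chi (Tnew m k) (hatL m) = 1 ∨ chi (Tnew m k) (hatL m) = -1)) ∧
    (k ≠ 0 → chi (Tnew m k) (hatL m) = 0) := by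
  constructor
  · rintro rfl
    rw [hatL_succ (show 2 ≤ m by omega)]
    obtain ⟨e, he⟩ := chi_Tnew0_step (m := m) (by omega) (hatL (m-2))
    rw [he]
    exact neg_one_pow_mul_pm e _ (chi_rho (m-2))
  · intro hk0
    rw [hatL_succ (show 2 ≤ m by omega)]
    exact chi_Tnew_zero (by omega) hk _

end RowNewTrans

section TmidMain

def goodMid (m k p : ℕ) : Prop := (k + p + 1 = m ∧ p < k) ∨ (k + p = m ∧ k + 2 ≤ p)

theorem chi_Tmid_main : ∀ m k p : ℕ, k+2 ≤ m → p+1 ≤ m → p ≠ k → p ≠ k+1 →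
    ((goodMid m k p →
        (chi (Tmid m k p) (hatL m) = 1 ∨ chi (Tmid m k p) (hatL m) = -1)) ∧
     (¬ goodMid m k p → chi (Tmid m k p) (hatL m) = 0)) := by
  intro m
  induction m using Nat.strong_induction_on with
  | _ m ih =>
    intro k p hk hp hpk hpk1
    rcases Nat.eq_zero_or_pos k with hk0 | hk1
    · subst hk0
      have hp2 : 2 ≤ p := by omega
      constructor
      · intro hg
        rcases hg with ⟨h1, h2⟩ | ⟨h1, h2⟩ <;> omega
      · intro _
        rw [hatL_succ (show 2 ≤ m by omega)]
        exact chi_Tmid_zero1 hp2 hp _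
    · rcases Nat.eq_zero_or_pos p with hp0 | hp1
      · subst hp0
        constructor
        · intro hg
          rcases hg with ⟨h1, h2⟩ | ⟨h1, h2⟩ <;> omega
        · intro _
          rw [hatL_succ (show 2 ≤ m by omega)]
          exact chi_Tmid_zero2 hk1 hk _
      · -- k, p ≥ 1
        rcases Nat.lt_or_ge k (m-2) with hka | hkb
        · rcases Nat.lt_or_ge p (m-1) with hpa | hpb
          · -- interior: to Tmid (m-2) (k-1) (p-1)
            have hrec : ∀ μ, ∃ e : ℕ, chi (Tmid m k p) ((2*m-1) :: μ) =
                (-1 : ℤ)^e * chi (Tmid (m-2) (k-1) (p-1)) μ := by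
              intro μ
              exact ⟨_, by rw [chi_step_single μ (filter_Tmid hk hp hk1 hp1 hpk),
                remove_Tmid_a hk hp hk1 hp1 hpk hpk1 (by omega) (by omega)]⟩
            have hIH := ih (m-2) (by omega) (k-1) (p-1) (by omega) (by omega)
              (by omega) (by omega)
            have hgood : goodMid m k p ↔ goodMid (m-2) (k-1) (p-1) := by
              unfold goodMid
              omega
            obtain ⟨e, he⟩ := hrec (hatL (m-2))
            rw [hatL_succ (show 2 ≤ m by omega)]
            constructor
            · intro hg
              rw [he]
              exact neg_one_pow_mul_pm e _ (hIH.1 (hgood.mp hg))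
            · intro hg
              rw [he, hIH.2 (fun hg2 => hg (hgood.mpr hg2))]
              ring
          · -- p = m-1 : to Tnew (m-2) (k-1)
            have hpeq : p = m-1 := by omega
            subst hpeq
            have hm4 : 4 ≤ m := by omega
            have hrec : ∀ μ, ∃ e : ℕ, chi (Tmid m k (m-1)) ((2*m-1) :: μ) =
                (-1 : ℤ)^e * chi (Tnew (m-2) (k-1)) μ := by
              intro μ
              exact ⟨_, by rw [chi_step_single μ (filter_Tmid hk hp hk1 hp1 hpk),
                remove_Tmid_c hm4 hk1 (by omega)]⟩
            have hT := chi_Tnew_main (m := m-2) (k := k-1) (by omega)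
            have hgood : goodMid m k (m-1) ↔ k - 1 = 0 := by
              unfold goodMid
              omega
            obtain ⟨e, he⟩ := hrec (hatL (m-2))
            rw [hatL_succ (show 2 ≤ m by omega)]
            constructor
            · intro hg
              rw [he]
              exact neg_one_pow_mul_pm e _ (hT.1 (hgood.mp hg))
            · intro hg
              rw [he, hT.2 (fun hg2 => hg (hgood.mpr hg2))]
              ring
        · -- k = m-2 : to Trow (m-2) (p-1), with p ≤ m-3
          have hkeq : k = m-2 := by omega
          subst hkeq
          have hpa : p ≤ m-3 := by omega
          have hm4 : 4 ≤ m := by omega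
          have hrec : ∀ μ, ∃ e : ℕ, chi (Tmid m (m-2) p) ((2*m-1) :: μ) =
              (-1 : ℤ)^e * chi (Trow (m-2) (p-1)) μ := by
            intro μ
            exact ⟨_, by rw [chi_step_single μ (filter_Tmid hk hp hk1 hp1 hpk),
              remove_Tmid_b hm4 hp1 hpa]⟩
          have hT := chi_Trow_main (m := m-2) (p := p-1) (by omega)
          have hgood : goodMid m (m-2) p ↔ p - 1 = 0 := by
            unfold goodMid
            omega
          obtain ⟨e, he⟩ := hrec (hatL (m-2))
          rw [hatL_succ (show 2 ≤ m by omega)]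
          constructor
          · intro hg
            rw [he]
            exact neg_one_pow_mul_pm e _ (hT.1 (hgood.mp hg))
          · intro hg
            rw [he, hT.2 (fun hg2 => hg (hgood.mpr hg2))]
            ring

end TmidMain
section HatLemmas

lemma conj_Tmid {m k p j : ℕ} (hk : k+2 ≤ m) (hp : p+1 ≤ m) (hpk : p ≠ k) (hpk1 : p ≠ k+1)
    (hj : j < m) :
    conjPart (Tmid m k p) j =
      m - j - (if j = m-k-1 then 1 else 0) + (if j = m-p then 1 else 0) := by
  rw [Tmid]
  apply conjPart_map_range (by split_ifs <;> omega)
  intro i hi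
  beta_reduce
  split_ifs <;> omega

lemma conj_Trow {m p j : ℕ} (hp : p+2 ≤ m) (hj : j < m) :
    conjPart (Trow m p) j =
      (if j = 0 then m-1 else m-j) + (if j = m-p then 1 else 0) := by
  rw [Trow]
  apply conjPart_map_range (by split_ifs <;> omega)
  intro i hi
  beta_reduce
  split_ifs <;> omega

lemma conj_Tnew {m k j : ℕ} (hk : k+2 ≤ m) (hj : j < m) :
    conjPart (Tnew m k) j =
      if j = 0 then m+1 else m - j - (if j = m-k-1 then 1 else 0) := by
  rw [Tnew]
  apply conjPart_map_range (by split_ifs <;> omega)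
  intro i hi
  beta_reduce
  split_ifs <;> omega

lemma hat_Tmid_good {m k p : ℕ} (hk : k+2 ≤ m) (hp : p+1 ≤ m) (hpk : p ≠ k) (hpk1 : p ≠ k+1)
    (hg : goodMid m k p) :
    hat (Tmid m k p) = hatL m := by
  have hg' : (k + p + 1 = m ∧ p < k) ∨ (k + p = m ∧ k + 2 ≤ p) := hg
  have hd : durfee (Tmid m k p) = (m+1)/2 := by
    rw [Tmid]
    apply durfee_map_range (by omega)
    intro i hi
    beta_reduce
    rcases hg' with ⟨h1, h2⟩ | ⟨h1, h2⟩ <;> split_ifs <;> omega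
  rw [hat, hd, hatL]
  apply List.map_congr_left
  intro i hi
  simp only [List.mem_range] at hi
  rw [hookLen, conj_Tmid hk hp hpk hpk1 (by omega), Tmid, part_map_range _ (by omega : i < m)]
  beta_reduce
  rcases hg' with ⟨h1, h2⟩ | ⟨h1, h2⟩ <;> split_ifs <;> omega

lemma hat_Trow0 {m : ℕ} (hm : 2 ≤ m) : hat (Trow m 0) = hatL m := by
  have hd : durfee (Trow m 0) = (m+1)/2 := by
    rw [Trow]
    apply durfee_map_range (by omega)
    intro i hi
    beta_reduce
    split_ifs <;> omega
  rw [hat, hd, hatL]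
  apply List.map_congr_left
  intro i hi
  simp only [List.mem_range] at hi
  rw [hookLen, conj_Trow (by omega) (by omega), Trow, part_map_range _ (by omega : i < m-1)]
  beta_reduce
  split_ifs <;> omega

lemma hat_Tnew0 {m : ℕ} (hm : 2 ≤ m) : hat (Tnew m 0) = hatL m := by
  have hd : durfee (Tnew m 0) = (m+1)/2 := by
    rw [Tnew]
    apply durfee_map_range (by omega)
    intro i hi
    beta_reduce
    split_ifs <;> omega
  rw [hat, hd, hatL]
  apply List.map_congr_left
  intro i hi
  simp only [List.mem_range] at hi
  rw [hookLen, conj_Tnew (by omega) (by omega), Tnew, part_map_range _ (by omega : i < m+1)]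
  beta_reduce
  split_ifs <;> omega

lemma hat_entry {l : List ℕ} {m i0 : ℕ} (heq : hat l = hatL m)
    (hi0 : i0 < (m+1)/2) :
    durfee l = (m+1)/2 ∧ hookLen l i0 i0 = 2*m - 4*i0 - 1 := by
  have hlen : durfee l = (m+1)/2 := by
    have := congrArg List.length heq
    simpa [hat, hatL] using this
  refine ⟨hlen, ?_⟩
  have h1 : (hat l)[i0]'(by simp [hat, hlen]; omega) =
      (hatL m)[i0]'(by simp [hatL]; omega) := by
    congr 1
  simpa [hat, hatL] using h1

lemma hat_Tmid_bad {m k p : ℕ} (hk : k+2 ≤ m) (hp : p+1 ≤ m) (hpk : p ≠ k) (hpk1 : p ≠ k+1)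
    (hg : ¬ goodMid m k p) :
    hat (Tmid m k p) ≠ hatL m := by
  intro heq
  have hg' : ¬((k + p + 1 = m ∧ p < k) ∨ (k + p = m ∧ k + 2 ≤ p)) := hg
  set i0 := min k (m-1-k) with hi0def
  have hi0 : i0 < (m+1)/2 := by omega
  obtain ⟨hd, hentry⟩ := hat_entry heq hi0
  rw [hookLen, conj_Tmid hk hp hpk hpk1 (by omega), Tmid,
    part_map_range _ (by omega : i0 < m)] at hentry
  beta_reduce at hentry
  split_ifs at hentry <;> omega

lemma hat_Trow_bad {m p : ℕ} (hp1 : 1 ≤ p) (hp : p+2 ≤ m) :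
    hat (Trow m p) ≠ hatL m := by
  intro heq
  obtain ⟨hd, hentry⟩ := hat_entry heq (show 0 < (m+1)/2 by omega)
  rw [hookLen, conj_Trow hp (by omega), Trow,
    part_map_range _ (by omega : 0 < m-1)] at hentry
  beta_reduce at hentry
  split_ifs at hentry <;> omega

lemma hat_Tnew_bad {m k : ℕ} (hk1 : 1 ≤ k) (hk : k+2 ≤ m) :
    hat (Tnew m k) ≠ hatL m := by
  intro heq
  obtain ⟨hd, hentry⟩ := hat_entry heq (show 0 < (m+1)/2 by omega)
  rw [hookLen, conj_Tnew hk (by omega), Tnew,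
    part_map_range _ (by omega : 0 < m+1)] at hentry
  beta_reduce at hentry
  split_ifs at hentry <;> omega

end HatLemmas
section Class1

lemma length_betaSet (l : List ℕ) : (betaSet l).length = l.length := by
  simp [betaSet]

lemma betaSet_sorted {l : List ℕ} (hl : l.Pairwise (· ≥ ·)) : (betaSet l).Pairwise (· > ·) := by
  rw [betaSet, List.pairwise_iff_getElem]
  intro i j hi hj hij
  simp only [List.length_map, List.length_range] at hi hj
  simp only [List.getElem_map, List.getElem_range]
  rw [betaEntry, betaEntry]
  have h1 : part l j ≤ part l i := by
    rw [part, part, List.getD_eq_getElem l 0 hj, List.getD_eq_getElem l 0 (by omega)]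
    exact List.pairwise_iff_getElem.mp hl i j (by omega) hj hij
  omega

lemma part_append_cons (pre suf : List ℕ) (a i : ℕ) :
    part (pre ++ a :: suf) i =
      if i < pre.length then part pre i
      else if i = pre.length then a else part suf (i - pre.length - 1) := by
  rcases Nat.lt_or_ge i pre.length with h | h
  · rw [if_pos h, part, part, List.getD_append _ _ _ _ h]
  · rw [if_neg (by omega), part, List.getD_append_right _ _ _ _ h]
    rcases Nat.eq_or_lt_of_le h with he | hlt
    · rw [if_pos he.symm, ← he]
      simp
    · rw [if_neg (by omega)]
      have h2 : i - pre.length = (i - pre.length - 1) + 1 := by omega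
      rw [h2]
      simp [part]

lemma sortDesc_replace {B : List ℕ} (hB : B.Pairwise (· > ·)) {x : ℕ} (hx1 : 1 ≤ x)
    (hmem : x ∈ B) (hnot : (x-1) ∉ B) :
    ∃ pre suf, B = pre ++ x :: suf ∧
      sortDesc ((x-1) :: B.erase x) = pre ++ (x-1) :: suf ∧
      (pre ++ (x-1) :: suf).Pairwise (· > ·) := by
  obtain ⟨pre, suf, rfl⟩ := List.append_of_mem hmem
  have hsplit := List.pairwise_append.mp hB
  obtain ⟨hpre, hxs, hcross⟩ := hsplit
  rw [List.pairwise_cons] at hxs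
  obtain ⟨hxsuf, hsuf⟩ := hxs
  have hxpre : x ∉ pre := by
    intro hmem'
    exact absurd (hcross x hmem' x (by simp)) (by omega)
  have herase : (pre ++ x :: suf).erase x = pre ++ suf := by
    rw [List.erase_append_right _ hxpre, List.erase_cons_head]
  have hsorted : (pre ++ (x-1) :: suf).Pairwise (· > ·) := by
    rw [List.pairwise_append]
    refine ⟨hpre, ?_, ?_⟩
    · rw [List.pairwise_cons]
      refine ⟨fun b hb => ?_, hsuf⟩
      have h1 : x > b := hxsuf b hb
      have h2 : b ≠ x - 1 := fun hbe => hnot (by simp [← hbe]; right; right; exact hb)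
      omega
    · intro a ha b hb
      rcases List.mem_cons.mp hb with rfl | hb'
      · have := hcross a ha x (by simp)
        omega
      · exact hcross a ha b (by simp [hb'])
  refine ⟨pre, suf, rfl, ?_, hsorted⟩
  rw [herase]
  exact sortDesc_eq List.perm_middle.symm (hsorted.imp (fun h => le_of_lt h))

lemma partOfBeta_decode {B σ : List ℕ} (hB : B.Pairwise (· > ·)) (h : partOfBeta B = σ) :
    σ.length ≤ B.length ∧
    (∀ i, i < σ.length → part B i = part σ i + (B.length - 1 - i) ∧ 0 < part σ i) ∧
    (∀ i, σ.length ≤ i → i < B.length → part B i ≤ B.length - 1 - i) := by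
  set L := B.length with hLdef
  set u : ℕ → ℕ := fun i => part B i - (L - 1 - i) with hu
  have hfil : ((List.range L).map u).filter (fun x => decide (0 < x)) = σ := h
  have hBadj : ∀ i, i + 1 < L → part B (i+1) < part B i := by
    intro i hi
    rw [part, part, List.getD_eq_getElem B 0 (by omega), List.getD_eq_getElem B 0 (by omega)]
    exact List.pairwise_iff_getElem.mp hB i (i+1) (by omega) (by omega) (by omega)
  have hsort : ((List.range L).map u).Pairwise (· ≥ ·) := by
    rw [← List.isChain_iff_pairwise]
    rw [List.isChain_iff_getElem]
    intro i hi
    simp only [List.length_map, List.length_range] at hi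
    simp only [List.getElem_map, List.getElem_range]
    have := hBadj i (by omega)
    simp only [hu]
    omega
  obtain ⟨htake, hzero⟩ := sorted_filter_pos _ hsort
  rw [hfil] at htake hzero
  have hlen : σ.length ≤ L := by
    rw [← hfil]
    calc (((List.range L).map u).filter _).length ≤ ((List.range L).map u).length :=
          List.length_filter_le _ _
      _ = L := by simp
  refine ⟨hlen, ?_, ?_⟩
  · intro i hi
    have hiL : i < L := by omega
    have hσi : part σ i = u i := by
      conv_lhs => rw [htake]
      have hlt : i < (((List.range L).map u).take σ.length).length := by
        simp
        omega
      rw [part, List.getD_eq_getElem _ 0 hlt, List.getElem_take]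
      simp
    have hall : ∀ y ∈ σ, 0 < y := by
      intro y hy
      rw [← hfil] at hy
      have := List.of_mem_filter hy
      simpa using this
    have hpos : 0 < part σ i := by
      apply hall
      rw [part, List.getD_eq_getElem σ 0 hi]
      exact List.getElem_mem hi
    have hui : u i = part B i - (L - 1 - i) := rfl
    constructor
    · omega
    · exact hpos
  · intro i hle hiL
    have := hzero i (by simpa using hiL) (by simpa using hle)
    simp only [List.getElem_map, List.getElem_range] at this
    have hui : u i = part B i - (L - 1 - i) := rfl
    omega

end Class1
section Class2

lemma sortdesc_beta_staircase {m k : ℕ} (hk : k < m) :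
    sortDesc ((2*m-2*k-1-1) :: ((List.range m).map (fun i => 2*m-2*i-1)).erase (2*m-2*k-1)) =
      (List.range m).map (fun i => if i = k then 2*m-2*k-2 else 2*m-2*i-1) := by
  have hsplitF := map_range_split (fun i => 2*m-2*i-1) hk
  have hsplitG := map_range_split (fun i => if i = k then 2*m-2*k-2 else 2*m-2*i-1) hk
  beta_reduce at hsplitF hsplitG
  have hpre : (List.range k).map (fun i => if i = k then 2*m-2*k-2 else 2*m-2*i-1)
      = (List.range k).map (fun i => 2*m-2*i-1) := by
    apply List.map_congr_left
    intro i hi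
    simp only [List.mem_range] at hi
    rw [if_neg (by omega)]
  have hsuf : (List.range (m-1-k)).map
        (fun i => if i + k + 1 = k then 2*m-2*k-2 else 2*m-2*(i+k+1)-1)
      = (List.range (m-1-k)).map (fun i => 2*m-2*(i+k+1)-1) := by
    apply List.map_congr_left
    intro i hi
    rw [if_neg (by omega)]
  have hmid : (if k = k then 2*m-2*k-2 else 2*m-2*k-1) = 2*m-2*k-1-1 := by
    rw [if_pos rfl]
    omega
  have hsorted : ((List.range m).map
      (fun i => if i = k then 2*m-2*k-2 else 2*m-2*i-1)).Pairwise (· ≥ ·) :=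
    sorted_ge_map_range (fun i j hij hj => by split_ifs <;> omega)
  rw [hsplitG, hpre, hsuf, hmid] at hsorted
  rw [hsplitG, hpre, hsuf, hmid]
  have hnotpre : (2*m-2*k-1) ∉ (List.range k).map (fun i => 2*m-2*i-1) := by
    rw [mem_map_range]
    rintro ⟨i, hi, hfi⟩
    omega
  rw [hsplitF, List.erase_append_right _ hnotpre, List.erase_cons_head]
  exact sortDesc_eq List.perm_middle.symm hsorted

lemma removeHook_staircase_mid {m k : ℕ} (hk : k + 2 ≤ m) :
    removeHook (staircase m) (2*m-2*k-1) 1 =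
      (List.range m).map (fun i => if i = k then m-i-1 else m-i) := by
  rw [removeHook, betaSet_staircase, sortdesc_beta_staircase (show k < m by omega),
    partOfBeta_map_range (c := m) le_rfl (fun i hi => by split_ifs <;> omega)]
  apply List.map_congr_left
  intro i hi
  simp only [List.mem_range] at hi
  split_ifs <;> omega

lemma removeHook_staircase_last {m : ℕ} (hm : 1 ≤ m) :
    removeHook (staircase m) (2*m-2*(m-1)-1) 1 =
      (List.range (m-1)).map (fun i => m-i) := by
  rw [removeHook, betaSet_staircase, sortdesc_beta_staircase (show m-1 < m by omega),
    partOfBeta_map_range (c := m-1) (by omega) (fun i hi => by split_ifs <;> omega)]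
  apply List.map_congr_left
  intro i hi
  simp only [List.mem_range] at hi
  split_ifs <;> omega

lemma reconstruct {σ τ : List ℕ} (hτ : IsPartition τ) {x' : ℕ}
    (hmem : x' ∈ betaSet τ) (hx1 : 1 ≤ x') (hnot : (x' - 1) ∉ betaSet τ)
    (hrem : removeHook τ x' 1 = σ) :
    ∃ p, p < τ.length ∧
      (τ.length = σ.length ∨ (τ.length = σ.length + 1 ∧ p = τ.length - 1)) ∧
      τ = (List.range τ.length).map (fun i => part σ i + if i = p then 1 else 0) := by
  have hBsort := betaSet_sorted hτ.1
  obtain ⟨pre, suf, hsplit, hsd, hB0sort⟩ := sortDesc_replace hBsort hx1 hmem hnot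
  rw [removeHook, hsd] at hrem
  obtain ⟨hlen1, hdec1, hdec2⟩ := partOfBeta_decode hB0sort hrem
  set L := τ.length with hLdef
  have hlenB : (pre ++ (x'-1) :: suf).length = L := by
    have h1 := congrArg List.length hsplit
    rw [length_betaSet] at h1
    simp at h1 ⊢
    omega
  have hpL : pre.length < L := by
    simp at hlenB
    omega
  have hBi : ∀ i, i < L → part (betaSet τ) i = part τ i + (L - 1 - i) := by
    intro i hi
    rw [betaSet]
    rw [part_map_range _ (by rwa [← hLdef] : i < τ.length), betaEntry, ← hLdef]
  have hB'B0 : ∀ i, part (betaSet τ) i =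
      part (pre ++ (x'-1) :: suf) i + if i = pre.length then 1 else 0 := by
    intro i
    rw [hsplit, part_append_cons, part_append_cons]
    split_ifs <;> omega
  have hpos : ∀ i, i < L → 0 < part τ i := by
    intro i hi
    rw [part, List.getD_eq_getElem τ 0 (by omega)]
    exact hτ.2 _ (List.getElem_mem _)
  rw [hlenB] at hlen1 hdec1 hdec2
  have hkey : ∀ i, i < L → i ≠ pre.length → (i < σ.length ∧ part τ i = part σ i) := by
    intro i hi hip
    rcases Nat.lt_or_ge i σ.length with hc | hc
    · refine ⟨hc, ?_⟩
      have h1 := (hdec1 i hc).1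
      have h2 := hBi i hi
      have h3 := hB'B0 i
      rw [if_neg hip] at h3
      omega
    · exfalso
      have h1 := hdec2 i hc hi
      have h2 := hBi i hi
      have h3 := hB'B0 i
      rw [if_neg hip] at h3
      have := hpos i hi
      omega
  have hform : ∀ i, i < L → part τ i = part σ i + if i = pre.length then 1 else 0 := by
    intro i hi
    by_cases hip : i = pre.length
    · rw [if_pos hip]
      have h2 := hBi i hi
      have h3 := hB'B0 i
      rw [if_pos hip] at h3
      rcases Nat.lt_or_ge i σ.length with hc | hc
      · have h1 := (hdec1 i hc).1
        omega
      · have h1 := hdec2 i hc hi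
        have h4 : part σ i = 0 := part_ge (by omega)
        have h5 : i = L - 1 := by
          by_contra hne
          have h6 := (hkey (i+1) (by omega) (by omega)).1
          omega
        have h7 := hpos i hi
        omega
    · rw [if_neg hip]
      exact (hkey i hi hip).2
  have hLcase : L = σ.length ∨ (L = σ.length + 1 ∧ pre.length = L - 1) := by
    rcases Nat.lt_or_ge pre.length σ.length with hc | hc
    · left
      by_contra hne
      have hL1 : σ.length < L := by omega
      have h1 := (hkey σ.length (by omega) (by omega)).1
      omega
    · have hp1 : pre.length = L - 1 := by
        by_contra hne
        have h2 := (hkey (pre.length + 1) (by omega) (by omega)).1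
        omega
      right
      refine ⟨?_, hp1⟩
      by_contra hne
      have h3 := (hkey (L-2) (by omega) (by omega)).1
      omega
  refine ⟨pre.length, hpL, hLcase, ?_⟩
  conv_lhs => rw [self_eq_map_range τ]
  rw [← hLdef]
  apply List.map_congr_left
  intro i hi
  simp only [List.mem_range] at hi
  exact hform i hi

end Class2
section Classify

lemma part_sorted {l : List ℕ} (h : l.Pairwise (· ≥ ·)) {i j : ℕ} (hij : i ≤ j) :
    part l j ≤ part l i := by
  rcases Nat.lt_or_ge j l.length with hj | hj
  · rcases Nat.eq_or_lt_of_le hij with rfl | hlt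
    · exact le_refl _
    · rw [part, part, List.getD_eq_getElem l 0 hj, List.getD_eq_getElem l 0 (by omega : i < l.length)]
      exact List.pairwise_iff_getElem.mp h i j (by omega) hj hlt
  · rw [part_ge hj]
    exact Nat.zero_le _

lemma classify {m : ℕ} {τ : List ℕ} (h : InN1 (staircase m) τ) :
    τ = staircase m ∨
    (∃ k p, k+2 ≤ m ∧ p+1 ≤ m ∧ p ≠ k ∧ p ≠ k+1 ∧ τ = Tmid m k p) ∨
    (∃ k, k+2 ≤ m ∧ τ = Tnew m k) ∨
    (∃ p, p+2 ≤ m ∧ τ = Trow m p) := by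
  obtain ⟨σ, ⟨-, x, hxmem, hx1, hxnot, hxrem⟩, hτpart, x', hx'mem, hx'1, hx'not, hx'rem⟩ := h
  rw [betaSet_staircase] at hxmem
  rw [mem_map_range] at hxmem
  obtain ⟨k, hk, hxk⟩ := hxmem
  rw [← hxk] at hxrem
  clear hxk hx1 hxnot
  obtain ⟨p, hpL, hLcase, hτeq⟩ := reconstruct ⟨hτpart.1, hτpart.2⟩ hx'mem hx'1 hx'not hx'rem
  rcases Nat.lt_or_ge k (m-1) with hk2 | hk2
  · -- σ from removeHook_staircase_mid
    rw [removeHook_staircase_mid (show k+2 ≤ m by omega)] at hxrem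
    subst hxrem
    have hσlen : ((List.range m).map (fun i => if i = k then m-i-1 else m-i)).length = m := by
      simp
    rw [hσlen] at hLcase
    have hσpart : ∀ i, i < m →
        part ((List.range m).map (fun i => if i = k then m-i-1 else m-i)) i
          = if i = k then m-i-1 else m-i := fun i hi => part_map_range _ hi
    have hσpart0 : ∀ i, m ≤ i →
        part ((List.range m).map (fun i => if i = k then m-i-1 else m-i)) i = 0 :=
      fun i hi => part_ge (by simpa using hi)
    rcases hLcase with hlen | ⟨hlen, hpeq⟩
    · -- τ.length = m
      rw [hlen] at hτeq
      have hpm : p < m := by omega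
      by_cases hpk : p = k
      · left
        rw [hτeq, staircase_eq_map]
        apply List.map_congr_left
        intro i hi
        simp only [List.mem_range] at hi
        rw [hσpart i hi]
        split_ifs <;> omega
      · by_cases hpk1 : p = k+1
        · exfalso
          have hkb : k + 1 < m := by omega
          have hs : part τ (k+1) ≤ part τ k := part_sorted hτpart.1 (by omega)
          have e3 : part τ k = m-k-1 := by
            conv_lhs => rw [hτeq]
            rw [part_map_range _ (by omega : k < m), hσpart k (by omega)]
            split_ifs <;> omega
          have e4 : part τ (k+1) = m-k := by
            conv_lhs => rw [hτeq]
            rw [part_map_range _ (by omega : k+1 < m), hσpart (k+1) (by omega)]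
            split_ifs <;> omega
          rw [e3, e4] at hs
          omega
        · right; left
          refine ⟨k, p, by omega, by omega, hpk, hpk1, ?_⟩
          rw [hτeq, Tmid]
          apply List.map_congr_left
          intro i hi
          simp only [List.mem_range] at hi
          rw [hσpart i hi]
          split_ifs <;> omega
    · -- τ.length = m + 1, p = m
      rw [hlen] at hτeq hpeq
      rw [hpeq] at hτeq
      right; right; left
      refine ⟨k, by omega, ?_⟩
      rw [hτeq, Tnew]
      apply List.map_congr_left
      intro i hi
      simp only [List.mem_range] at hi
      rcases Nat.lt_or_ge i m with him | him
      · rw [hσpart i him]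
        split_ifs <;> omega
      · rw [hσpart0 i him]
        split_ifs <;> omega
  · -- k = m-1
    have hke : k = m-1 := by omega
    have hm1 : 1 ≤ m := by omega
    rw [hke, removeHook_staircase_last hm1] at hxrem
    subst hxrem
    have hσlen : ((List.range (m-1)).map (fun i => m-i)).length = m-1 := by simp
    rw [hσlen] at hLcase
    have hσpart : ∀ i, i < m-1 →
        part ((List.range (m-1)).map (fun i => m-i)) i = m-i := fun i hi => part_map_range _ hi
    have hσpart0 : ∀ i, m-1 ≤ i →
        part ((List.range (m-1)).map (fun i => m-i)) i = 0 :=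
      fun i hi => part_ge (by simpa using hi)
    rcases hLcase with hlen | ⟨hlen, hpeq⟩
    · -- τ.length = m-1 : Trow m p
      rw [hlen] at hτeq
      right; right; right
      refine ⟨p, by omega, ?_⟩
      rw [hτeq, Trow]
      apply List.map_congr_left
      intro i hi
      simp only [List.mem_range] at hi
      rw [hσpart i hi]
      split_ifs <;> omega
    · -- τ.length = m, p = m-1 : staircase
      rw [hlen] at hτeq hpeq
      rw [hpeq] at hτeq
      rw [show m-1+1 = m by omega] at hτeq
      left
      rw [hτeq, staircase_eq_map]
      apply List.map_congr_left
      intro i hi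
      simp only [List.mem_range] at hi
      rcases Nat.lt_or_ge i (m-1) with him | him
      · rw [hσpart i him]
        split_ifs <;> omega
      · rw [hσpart0 i him]
        split_ifs <;> omega

end Classify
/-- For every `τ ∈ N(ρ_m, 1)`, `χ^τ(\hat ρ_m) ≠ 0` iff the principal hook partition of
`τ` equals `\hat ρ_m`, in which case `χ^τ(\hat ρ_m) = ±1`. -/
theorem stmt_12 (m : ℕ) :
    ∀ τ, InN1 (staircase m) τ →
      (chi τ (hat (staircase m)) ≠ 0 ↔ hat τ = hat (staircase m)) ∧
      (hat τ = hat (staircase m) →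
        chi τ (hat (staircase m)) = 1 ∨ chi τ (hat (staircase m)) = -1) := by
  intro τ hτ
  rw [hat_staircase]
  have hpm : ∀ v : ℤ, v = 1 ∨ v = -1 → v ≠ 0 := by rintro v (rfl | rfl) <;> norm_num
  rcases classify hτ with rfl | ⟨k, p, hk, hp, hpk, hpk1, rfl⟩ | ⟨k, hk, rfl⟩ | ⟨p, hp, rfl⟩
  · have h1 := chi_rho m
    exact ⟨⟨fun _ => hat_staircase m, fun _ => hpm _ h1⟩, fun _ => h1⟩
  · by_cases hg : goodMid m k p
    · have h1 := (chi_Tmid_main m k p hk hp hpk hpk1).1 hg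
      have h2 := hat_Tmid_good hk hp hpk hpk1 hg
      exact ⟨⟨fun _ => h2, fun _ => hpm _ h1⟩, fun _ => h1⟩
    · have h1 := (chi_Tmid_main m k p hk hp hpk hpk1).2 hg
      have h2 := hat_Tmid_bad hk hp hpk hpk1 hg
      exact ⟨⟨fun hne => absurd h1 hne, fun he => absurd he h2⟩, fun he => absurd he h2⟩
  · rcases Nat.eq_zero_or_pos k with rfl | hk1
    · have h1 := (chi_Tnew_main hk).1 rfl
      have h2 := hat_Tnew0 (m := m) (by omega)
      exact ⟨⟨fun _ => h2, fun _ => hpm _ h1⟩, fun _ => h1⟩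
    · have h1 := (chi_Tnew_main hk).2 (by omega)
      have h2 := hat_Tnew_bad hk1 hk
      exact ⟨⟨fun hne => absurd h1 hne, fun he => absurd he h2⟩, fun he => absurd he h2⟩
  · rcases Nat.eq_zero_or_pos p with rfl | hp1
    · have h1 := (chi_Trow_main hp).1 rfl
      have h2 := hat_Trow0 (m := m) (by omega)
      exact ⟨⟨fun _ => h2, fun _ => hpm _ h1⟩, fun _ => h1⟩
    · have h1 := (chi_Trow_main hp).2 (by omega)
      have h2 := hat_Trow_bad hp1 hp
      exact ⟨⟨fun hne => absurd h1 hne, fun he => absurd he h2⟩, fun he => absurd he h2⟩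
end

section
/- Assume that $\gamma_1, \gamma_2, \delta_1, \delta_2$ are partitions such that for all $1 \leq i,j \leq 2$, $\gamma_i$ can be obtained from $\delta_j$ by removing a rim hook of leg length $l_{i,j}$. Further assume $\gamma_1 \neq \gamma_2$, $\delta_1 \neq \delta_2$, and that neither of $\delta_1, \delta_2$ can be obtained from the other by removing a rim hook. Then $(-1)^{l_{1,1} + l_{1,2} + l_{2,1} + l_{2,2}} = -1$. -/
/-- `RemHookLeg δ γ l` : `γ` is obtained from `δ` by removing a rim hook of leg length `l`. -/
def RemHookLeg (δ γ : List ℕ) (l : ℕ) : Prop :=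
  ∃ x ∈ betaSet δ, ∃ r, 0 < r ∧ r ≤ x ∧ (x - r) ∉ betaSet δ ∧
    removeHook δ x r = γ ∧ legLen (betaSet δ) x r = l

namespace Hook

/-- padded beta set -/
def bset (n : ℕ) (l : List ℕ) : Finset ℕ :=
  (Finset.range n).image fun i => part l i + (n - 1 - i)

lemma part_eq_zero {l : List ℕ} {i : ℕ} (h : l.length ≤ i) : part l i = 0 :=
  List.getD_eq_default _ _ h

lemma part_pos {l : List ℕ} (hl : IsPartition l) {i : ℕ} (h : i < l.length) :
    0 < part l i := by
  have : part l i = l[i] := List.getD_eq_getElem _ _ h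
  rw [this]; exact hl.2 _ (l.getElem_mem h)

lemma part_mono {l : List ℕ} (hl : IsPartition l) {i j : ℕ} (h : i ≤ j) :
    part l j ≤ part l i := by
  rcases lt_or_ge j l.length with hj | hj
  · have hi : i < l.length := lt_of_le_of_lt h hj
    rw [show part l j = l[j] from List.getD_eq_getElem _ _ hj,
       show part l i = l[i] from List.getD_eq_getElem _ _ hi]
    rcases eq_or_lt_of_le h with rfl | h'
    · exact le_refl _
    · exact List.pairwise_iff_getElem.mp hl.1 i j hi hj h'
  · rw [part_eq_zero hj]; exact Nat.zero_le _

lemma partition_ext {l l' : List ℕ} (hl : IsPartition l) (hl' : IsPartition l')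
    (h : ∀ i, part l i = part l' i) : l = l' := by
  have hlen : l.length = l'.length := by
    by_contra hne
    rcases Nat.lt_or_ge l.length l'.length with hlt | hge
    · have h1 : part l l.length = 0 := part_eq_zero (le_refl _)
      have h2 : 0 < part l' l.length := part_pos hl' hlt
      rw [h] at h1; omega
    · have hlt : l'.length < l.length := by omega
      have h1 : part l' l'.length = 0 := part_eq_zero (le_refl _)
      have h2 : 0 < part l l'.length := part_pos hl hlt
      rw [h] at h2; omega
  refine List.ext_getElem hlen fun i h1 h2 => ?_
  have := h i
  rwa [show part l i = l[i] from List.getD_eq_getElem _ _ h1,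
       show part l' i = l'[i] from List.getD_eq_getElem _ _ h2] at this

end Hook

namespace Hook

lemma mem_bset {n : ℕ} {l : List ℕ} {v : ℕ} :
    v ∈ bset n l ↔ ∃ i, i < n ∧ part l i + (n - 1 - i) = v := by
  simp [bset, Finset.mem_image, Finset.mem_range]

/-- characterization of membership in a padded beta set -/
lemma bset_char {n : ℕ} {l : List ℕ} (hn : l.length ≤ n) {v : ℕ} :
    v ∈ bset n l ↔ (∃ i, i < l.length ∧ part l i + (n - 1 - i) = v) ∨ v + l.length < n := by
  rw [mem_bset]
  constructor
  · rintro ⟨i, hi, rfl⟩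
    rcases lt_or_ge i l.length with h | h
    · exact Or.inl ⟨i, h, rfl⟩
    · right; rw [part_eq_zero h]; omega
  · rintro (⟨i, hi, rfl⟩ | hv)
    · exact ⟨i, lt_of_lt_of_le hi hn, rfl⟩
    · refine ⟨n - 1 - v, by omega, ?_⟩
      rw [part_eq_zero (by omega)]; omega

/-- the list whose toFinset is bset -/
lemma bset_eq_toFinset {n : ℕ} (l : List ℕ) :
    bset n l = ((List.range n).map fun i => part l i + (n - 1 - i)).toFinset := by
  ext v
  simp [bset, Finset.mem_image, Finset.mem_range, List.mem_map, List.mem_range]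

lemma sorted_gt_bList {n : ℕ} {l : List ℕ} (hl : IsPartition l) :
    ((List.range n).map fun i => part l i + (n - 1 - i)).Pairwise (· > ·) := by
  rw [List.pairwise_iff_getElem]
  intro i j hi hj hij
  simp only [List.getElem_map, List.getElem_range] at *
  simp only [List.length_map, List.length_range] at hi hj
  have := part_mono hl (le_of_lt hij)
  omega

lemma bset_inj {l l' : List ℕ} (hl : IsPartition l) (hl' : IsPartition l') {n : ℕ}
    (h1 : l.length ≤ n) (h2 : l'.length ≤ n) (h : bset n l = bset n l') : l = l' := by
  have s1 := sorted_gt_bList (n := n) hl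
  have s2 := sorted_gt_bList (n := n) hl'
  have anti : IsAntisymm ℕ (· > ·) := ⟨fun a b hab hba => absurd hab (by omega)⟩
  have irr : IsIrrefl ℕ (· > ·) := ⟨fun a h => by omega⟩
  have nd1 := s1.nodup
  have nd2 := s2.nodup
  rw [bset_eq_toFinset, bset_eq_toFinset] at h
  have hperm := List.perm_of_nodup_nodup_toFinset_eq nd1 nd2 h
  have heq := hperm.eq_of_pairwise' s1 s2
  have hpt : ∀ i, part l i = part l' i := by
    intro i
    rcases lt_or_ge i n with hi | hi
    · have h1' : i < ((List.range n).map fun i => part l i + (n - 1 - i)).length := by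
        simpa using hi
      have h2' : i < ((List.range n).map fun i => part l' i + (n - 1 - i)).length := by
        simpa using hi
      have : ((List.range n).map fun i => part l i + (n - 1 - i))[i] =
          ((List.range n).map fun i => part l' i + (n - 1 - i))[i] := by
        congr 1
      simp only [List.getElem_map, List.getElem_range] at this
      omega
    · rw [part_eq_zero (le_trans h1 hi), part_eq_zero (le_trans h2 hi)]
  exact partition_ext hl hl' hpt

/-- shift characterization -/
lemma bset_shift {l : List ℕ} {n N : ℕ} (hn : l.length ≤ n) (hN : n ≤ N) {v : ℕ} :
    v ∈ bset N l ↔ (N - n ≤ v ∧ v - (N - n) ∈ bset n l) ∨ v + n < N := by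
  rw [bset_char (le_trans hn hN), bset_char hn]
  constructor
  · rintro (⟨i, hi, rfl⟩ | hv)
    · left
      constructor
      · omega
      · left; exact ⟨i, hi, by omega⟩
    · rcases lt_or_ge (v + n) N with h | h
      · right; exact h
      · left
        refine ⟨by omega, Or.inr (by omega)⟩
  · rintro (⟨hkv, (⟨i, hi, hv⟩ | hv)⟩ | hv)
    · left; exact ⟨i, hi, by omega⟩
    · right; omega
    · right; omega

end Hook

namespace Hook

lemma mem_betaSet_iff {l : List ℕ} {x : ℕ} : x ∈ betaSet l ↔ x ∈ bset l.length l := by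
  constructor
  · intro h
    obtain ⟨i, hi, rfl⟩ := List.mem_map.mp h
    exact mem_bset.mpr ⟨i, List.mem_range.mp hi, rfl⟩
  · intro h
    obtain ⟨i, hi, rfl⟩ := mem_bset.mp h
    exact List.mem_map.mpr ⟨i, List.mem_range.mpr hi, rfl⟩

lemma betaSet_toFinset {l : List ℕ} : (betaSet l).toFinset = bset l.length l := by
  ext v
  rw [List.mem_toFinset, mem_betaSet_iff]

lemma betaSet_sorted {l : List ℕ} (hl : IsPartition l) : (betaSet l).Pairwise (· > ·) :=
  sorted_gt_bList hl

/-- gap fact for strictly decreasing lists -/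
lemma gap {b : List ℕ} (hb : b.Pairwise (· > ·)) :
    ∀ d i, i + d < b.length → part b (i + d) + d ≤ part b i := by
  intro d
  induction d with
  | zero => intro i _; simp
  | succ d ih =>
    intro i hi
    have h1 : part b (i + d) + d ≤ part b i := ih i (by omega)
    have h2 : part b (i + (d+1)) < part b (i + d) := by
      have hj : i + (d + 1) < b.length := hi
      have hjd : i + d < b.length := by omega
      rw [show part b (i + (d+1)) = b[i + (d+1)] from List.getD_eq_getElem _ _ hj,
          show part b (i + d) = b[i + d] from List.getD_eq_getElem _ _ hjd]
      exact List.pairwise_iff_getElem.mp hb _ _ hjd hj (by omega)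
    omega

lemma lower {b : List ℕ} (hb : b.Pairwise (· > ·)) {i : ℕ} (hi : i < b.length) :
    b.length - 1 - i ≤ part b i := by
  have := gap hb (b.length - 1 - i) i (by omega)
  omega

lemma sorted_filter_part :
    ∀ {u : List ℕ}, u.Pairwise (· ≥ ·) →
      ∀ i, part (u.filter fun x => decide (0 < x)) i = part u i := by
  intro u
  induction u with
  | nil => intro _ i; rfl
  | cons a t ih =>
    intro hs i
    rw [List.pairwise_cons] at hs
    rcases Nat.eq_zero_or_pos a with rfl | ha
    · have ht0 : ∀ x ∈ t, x = 0 := fun x hx => Nat.le_zero.mp (hs.1 x hx)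
      have hf : (0 :: t).filter (fun x => decide (0 < x)) = [] := by
        rw [List.filter_eq_nil_iff]
        intro x hx
        rcases List.mem_cons.mp hx with rfl | hx'
        · simp
        · simp [ht0 x hx']
      rw [hf]
      match i with
      | 0 => rfl
      | (j+1) =>
        show (0:ℕ) = part t j
        rcases lt_or_ge j t.length with hj | hj
        · rw [show part t j = t[j] from List.getD_eq_getElem _ _ hj]
          exact (ht0 _ (t.getElem_mem hj)).symm
        · rw [part_eq_zero hj]
    · have hf : (a :: t).filter (fun x => decide (0 < x)) =
          a :: t.filter (fun x => decide (0 < x)) := by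
        simp [List.filter_cons, ha]
      rw [hf]
      match i with
      | 0 => rfl
      | (j+1) =>
        show part (t.filter fun x => decide (0 < x)) j = part t j
        exact ih hs.2 j

lemma partOfBeta_spec {b : List ℕ} (hb : b.Pairwise (· > ·)) :
    IsPartition (partOfBeta b) ∧ (partOfBeta b).length ≤ b.length ∧
      bset b.length (partOfBeta b) = b.toFinset := by
  set n := b.length with hn
  set u : List ℕ := (List.range n).map fun i => part b i - (n - 1 - i) with hu
  have hulen : u.length = n := by simp [hu]
  have hugetD : ∀ i < n, part u i = part b i - (n - 1 - i) := by
    intro i hi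
    have : i < u.length := by omega
    rw [show part u i = u[i] from List.getD_eq_getElem _ _ this]
    simp [hu]
  have husort : u.Pairwise (· ≥ ·) := by
    rw [List.pairwise_iff_getElem]
    intro i j hi hj hij
    simp only [hu, List.getElem_map, List.getElem_range]
    simp only [hulen] at hi hj
    have h1 := gap hb (j - i) i (by omega)
    have h2 := lower hb (show j < b.length by omega)
    rw [show i + (j - i) = j by omega] at h1
    omega
  have hp : partOfBeta b = u.filter fun x => decide (0 < x) := rfl
  have hpart : IsPartition (partOfBeta b) := by
    constructor
    · rw [hp]; exact husort.filter _
    · intro x hx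
      rw [hp, List.mem_filter] at hx
      simpa using hx.2
  have hplen : (partOfBeta b).length ≤ n := by
    rw [hp]
    calc (u.filter _).length ≤ u.length := List.length_filter_le _ _
    _ = n := hulen
  refine ⟨hpart, hplen, ?_⟩
  have key : ∀ i < n, part (partOfBeta b) i + (n - 1 - i) = part b i := by
    intro i hi
    rw [hp, sorted_filter_part husort i, hugetD i hi]
    have := lower hb (show i < b.length by omega)
    omega
  rw [bset_eq_toFinset]
  ext v
  simp only [List.mem_toFinset, List.mem_map, List.mem_range]
  constructor
  · rintro ⟨i, hi, rfl⟩
    rw [key i hi]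
    rcases lt_or_ge i b.length with h | h
    · rw [show part b i = b[i] from List.getD_eq_getElem _ _ h]
      exact b.getElem_mem h
    · omega
  · intro hv
    obtain ⟨i, hi, rfl⟩ := List.mem_iff_getElem.mp hv
    refine ⟨i, hi, ?_⟩
    rw [key i hi, show part b i = b[i] from List.getD_eq_getElem _ _ hi]

end Hook

namespace Hook

lemma removeHook_spec {l : List ℕ} (hl : IsPartition l) {x r : ℕ}
    (hx : x ∈ betaSet l) (hr : 0 < r) (hrx : r ≤ x) (hnx : (x - r) ∉ betaSet l) :
    IsPartition (removeHook l x r) ∧ (removeHook l x r).length ≤ l.length ∧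
      bset l.length (removeHook l x r) = insert (x - r) ((bset l.length l).erase x) := by
  set n := l.length with hn
  have hBsort := betaSet_sorted hl
  have irr : IsIrrefl ℕ (· > ·) := ⟨fun a h => by omega⟩
  have hBnd : (betaSet l).Nodup := hBsort.nodup
  set c : List ℕ := (x - r) :: (betaSet l).erase x with hc
  have hcnd : c.Nodup := by
    rw [hc, List.nodup_cons]
    exact ⟨fun h => hnx (List.mem_of_mem_erase h), hBnd.erase x⟩
  set b : List ℕ := sortDesc c with hb
  have hperm : b.Perm c := List.perm_insertionSort _ _
  have hbnd : b.Nodup := hperm.symm.nodup hcnd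
  have hbsortge : b.Pairwise (· ≥ ·) := List.pairwise_insertionSort _ _
  have hbsort : b.Pairwise (· > ·) := by
    have := List.Pairwise.and hbsortge hbnd
    exact this.imp (fun h => by omega)
  have hblen : b.length = n := by
    rw [hperm.length_eq, hc, List.length_cons, List.length_erase_of_mem hx]
    have hnpos : 0 < (betaSet l).length := List.length_pos_iff.mpr (List.ne_nil_of_mem hx)
    simp only [betaSet, List.length_map, List.length_range] at hnpos ⊢
    omega
  have hbfin : b.toFinset = insert (x - r) ((bset n l).erase x) := by
    rw [List.toFinset_eq_of_perm _ _ hperm, hc, List.toFinset_cons]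
    have herase : ((betaSet l).erase x).toFinset = (bset n l).erase x := by
      ext v
      rw [List.mem_toFinset, hBnd.mem_erase_iff, Finset.mem_erase, ← betaSet_toFinset,
        List.mem_toFinset]
      try tauto
    rw [herase]
  have hrh : removeHook l x r = partOfBeta b := rfl
  obtain ⟨h1, h2, h3⟩ := partOfBeta_spec hbsort
  rw [hrh]
  rw [hblen] at h3
  exact ⟨h1, by omega, by rw [h3, hbfin]⟩

/-- count of elements of S strictly between u and v -/
def cnt (S : Finset ℕ) (u v : ℕ) : ℕ := (S.filter fun y => u < y ∧ y < v).card

lemma legLen_eq_cnt {l : List ℕ} (hl : IsPartition l) (x r : ℕ) :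
    legLen (betaSet l) x r = cnt (bset l.length l) (x - r) x := by
  have irr : IsIrrefl ℕ (· > ·) := ⟨fun a h => by omega⟩
  have hBnd : (betaSet l).Nodup := (betaSet_sorted hl).nodup
  have hnd2 : ((betaSet l).filter fun y => decide (x - r < y ∧ y < x)).Nodup :=
    hBnd.filter _
  rw [legLen, ← List.toFinset_card_of_nodup hnd2, cnt]
  congr 1
  ext v
  rw [List.mem_toFinset, List.mem_filter, Finset.mem_filter, ← betaSet_toFinset,
    List.mem_toFinset]
  simp

end Hook

namespace Hook

lemma cnt_insert {S : Finset ℕ} {c : ℕ} (h : c ∉ S) (u v : ℕ) :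
    cnt (insert c S) u v = cnt S u v + (if u < c ∧ c < v then 1 else 0) := by
  rw [cnt, cnt, Finset.filter_insert]
  split_ifs with h1
  · rw [Finset.card_insert_of_notMem (fun hm => h (Finset.mem_filter.mp hm).1)]
  · rfl

lemma cnt_erase {S : Finset ℕ} {c : ℕ} (h : c ∈ S) (u v : ℕ) :
    cnt S u v = cnt (S.erase c) u v + (if u < c ∧ c < v then 1 else 0) := by
  have : S = insert c (S.erase c) := (Finset.insert_erase h).symm
  rw [this, cnt_insert (Finset.notMem_erase c S), ← this]

lemma cnt_split {S : Finset ℕ} {u m v : ℕ} (h1 : u < m) (h2 : m < v) :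
    cnt S u v = cnt S u m + cnt S m v + (if m ∈ S then 1 else 0) := by
  classical
  rw [cnt, cnt, cnt]
  have hsplit : (S.filter fun y => u < y ∧ y < v) =
      (S.filter fun y => u < y ∧ y < m) ∪ (S.filter fun y => m < y ∧ y < v) ∪
      (S.filter fun y => y = m) := by
    ext y
    simp only [Finset.mem_union, Finset.mem_filter]
    constructor
    · rintro ⟨hy, hu, hv⟩
      rcases lt_trichotomy y m with h | h | h
      · exact Or.inl (Or.inl ⟨hy, hu, h⟩)
      · exact Or.inr ⟨hy, h⟩
      · exact Or.inl (Or.inr ⟨hy, h, hv⟩)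
    · rintro ((⟨hy, hu, hv⟩ | ⟨hy, hu, hv⟩) | ⟨hy, rfl⟩)
      · exact ⟨hy, hu, by omega⟩
      · exact ⟨hy, by omega, hv⟩
      · exact ⟨hy, h1, h2⟩
  have d1 : Disjoint (S.filter fun y => u < y ∧ y < m) (S.filter fun y => m < y ∧ y < v) := by
    rw [Finset.disjoint_filter]
    intro y _ hy1 hy2
    omega
  have d2 : Disjoint ((S.filter fun y => u < y ∧ y < m) ∪ (S.filter fun y => m < y ∧ y < v))
      (S.filter fun y => y = m) := by
    rw [Finset.disjoint_left]
    intro y hy hy2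
    rcases Finset.mem_filter.mp hy2 with ⟨_, rfl⟩
    rcases Finset.mem_union.mp hy with h | h <;>
      · rcases Finset.mem_filter.mp h with ⟨_, hh⟩; omega
  rw [hsplit, Finset.card_union_of_disjoint d2, Finset.card_union_of_disjoint d1,
    Finset.filter_eq']
  split_ifs with h
  · simp
  · simp

end Hook

namespace Hook

lemma bset_move_pad {δ γ : List ℕ} {n N a b : ℕ}
    (hδn : δ.length ≤ n) (hγn : γ.length ≤ n) (hnN : n ≤ N)
    (ha : a ∈ bset n δ) (hb : b ∉ bset n δ)
    (h : bset n γ = insert b ((bset n δ).erase a)) :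
    bset N γ = insert (b + (N - n)) ((bset N δ).erase (a + (N - n))) := by
  set k := N - n with hk
  ext v
  rw [bset_shift hγn hnN, Finset.mem_insert, Finset.mem_erase, bset_shift hδn hnN]
  constructor
  · rintro (⟨hkv, hv⟩ | hv)
    · rw [h, Finset.mem_insert, Finset.mem_erase] at hv
      rcases hv with rfl | ⟨hva, hvδ⟩
      · left; omega
      · right
        refine ⟨by omega, Or.inl ⟨by omega, ?_⟩⟩
        rwa [show v - k = v - (N - n) from rfl]
    · right
      constructor
      · intro hva
        apply hb
        have : a + k < N := by
          -- a ∈ bset n δ means a corresponds; but we need a + k ≥ v impossible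
          omega
        omega
      · right; omega
  · rintro (rfl | ⟨hva, (⟨hkv, hv⟩ | hv)⟩)
    · left
      refine ⟨by omega, ?_⟩
      rw [h, Finset.mem_insert]
      left; omega
    · left
      refine ⟨by omega, ?_⟩
      rw [h, Finset.mem_insert, Finset.mem_erase]
      right
      exact ⟨by omega, hv⟩
    · right; omega

end Hook

namespace Hook

lemma cnt_pad {δ : List ℕ} {n N : ℕ} (hδn : δ.length ≤ n) (hnN : n ≤ N) (u v : ℕ) :
    cnt (bset N δ) (u + (N - n)) (v + (N - n)) = cnt (bset n δ) u v := by
  set k := N - n with hk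
  rw [cnt, cnt]
  have himg : ((bset N δ).filter fun y => u + k < y ∧ y < v + k) =
      ((bset n δ).filter fun y => u < y ∧ y < v).image (· + k) := by
    ext w
    simp only [Finset.mem_filter, Finset.mem_image]
    constructor
    · rintro ⟨hw, hu, hv⟩
      rw [bset_shift hδn hnN] at hw
      rcases hw with ⟨hkw, hw⟩ | hw
      · exact ⟨w - k, ⟨hw, by omega, by omega⟩, by omega⟩
      · omega
    · rintro ⟨y, ⟨hy, hu, hv⟩, rfl⟩
      refine ⟨?_, by omega, by omega⟩
      rw [bset_shift hδn hnN]
      left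
      exact ⟨by omega, by rwa [show y + k - (N - n) = y by omega]⟩
  rw [himg, Finset.card_image_of_injective _ (fun a b h => by omega)]

lemma bset_ne {l l' : List ℕ} (hl : IsPartition l) (hl' : IsPartition l') {n : ℕ}
    (h1 : l.length ≤ n) (h2 : l'.length ≤ n) (h : l ≠ l') : bset n l ≠ bset n l' :=
  fun he => h (bset_inj hl hl' h1 h2 he)

lemma rem_of_bset {δ δ' : List ℕ} (hδ : IsPartition δ) (hδ' : IsPartition δ') {N a b : ℕ}
    (hδN : δ.length ≤ N) (hδ'N : δ'.length ≤ N)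
    (ha : a ∈ bset N δ) (hb : b ∉ bset N δ) (hab : b < a)
    (h : bset N δ' = insert b ((bset N δ).erase a)) : ∃ m, RemHookLeg δ δ' m := by
  set n := δ.length with hn
  set k := N - n with hk
  have hx : k ≤ a := by
    by_contra hka
    apply hb
    rw [bset_shift (le_refl n) (le_trans (le_refl n) (by omega))]
    right; omega
  have hbk : k ≤ b := by
    by_contra hkb
    apply hb
    rw [bset_shift (le_refl n) (show n ≤ N by omega)]
    right; omega
  have hxm : a - k ∈ bset n δ := by
    rw [bset_shift (le_refl n) (show n ≤ N by omega)] at ha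
    rcases ha with ⟨_, ha⟩ | ha
    · exact ha
    · omega
  have hbm : b - k ∉ bset n δ := by
    intro hmem
    apply hb
    rw [bset_shift (le_refl n) (show n ≤ N by omega)]
    left
    exact ⟨hbk, hmem⟩
  set x := a - k with hxdef
  set r := a - b with hrdef
  have hr : 0 < r := by omega
  have hrx : r ≤ x := by omega
  have hxβ : x ∈ betaSet δ := mem_betaSet_iff.mpr hxm
  have hxrβ : (x - r) ∉ betaSet δ := by
    rw [mem_betaSet_iff, show x - r = b - k by omega]
    exact hbm
  obtain ⟨hpγ, hlγ, hbγ⟩ := removeHook_spec hδ hxβ hr hrx hxrβ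
  have hpad := bset_move_pad (le_refl n) hlγ (show n ≤ N by omega) hxm hbm
    (by rw [hbγ, show x - r = b - k by omega])
  rw [show b - k + (N - n) = b by omega, show x + (N - n) = a by omega] at hpad
  have : removeHook δ x r = δ' := by
    apply bset_inj hpγ hδ' (le_trans hlγ (by omega)) hδ'N
    rw [hpad, h]
  exact ⟨legLen (betaSet δ) x r, x, hxβ, r, hr, hrx, hxrβ, this, rfl⟩

end Hook

namespace Hook

set_option maxHeartbeats 1000000 in
lemma move_structure {S S' : Finset ℕ} {a b a' b' : ℕ}
    (haS : a ∈ S) (hbS : b ∉ S) (hab : b < a)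
    (haS' : a' ∈ S') (hbS' : b' ∉ S') (hab' : b' < a')
    (e : insert b (S.erase a) = insert b' (S'.erase a'))
    (hne : S ≠ S')
    (hm1 : ¬ ∃ c d, c ∈ S ∧ d ∉ S ∧ d < c ∧ S' = insert d (S.erase c))
    (hm2 : ¬ ∃ c d, c ∈ S' ∧ d ∉ S' ∧ d < c ∧ S = insert d (S'.erase c)) :
    b' ∈ S ∧ b ∈ S' ∧ a' ∉ S ∧ a ∉ S' ∧ b ≠ b' ∧ a ≠ a' ∧ a ≠ b' ∧ a' ≠ b ∧
    S' = insert a' (insert b ((S.erase a).erase b')) := by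
  have E : ∀ v : ℕ, (v = b ∨ (v ≠ a ∧ v ∈ S)) ↔ (v = b' ∨ (v ≠ a' ∧ v ∈ S')) := by
    intro v
    have := Finset.ext_iff.mp e v
    simpa [Finset.mem_insert, Finset.mem_erase] using this
  clear e
  have hba : b ≠ a := by omega
  have hb'a' : b' ≠ a' := by omega
  have F1 : b' = b ∨ (b' ≠ a ∧ b' ∈ S) := (E b').mpr (Or.inl rfl)
  have F2 : b = b' ∨ (b ≠ a' ∧ b ∈ S') := (E b).mp (Or.inl rfl)
  have F3 : a' ≠ b ∧ (a' = a ∨ a' ∉ S) := by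
    have hL : ¬(a' = b ∨ (a' ≠ a ∧ a' ∈ S)) := by
      intro h
      rcases (E a').mp h with h' | ⟨h', _⟩
      · omega
      · exact h' rfl
    push_neg at hL
    exact ⟨hL.1, by tauto⟩
  have F4 : a ≠ b' ∧ (a = a' ∨ a ∉ S') := by
    have hL : ¬(a = b' ∨ (a ≠ a' ∧ a ∈ S')) := by
      intro h
      rcases (E a).mpr h with h' | ⟨h', _⟩
      · omega
      · exact h' rfl
    push_neg at hL
    exact ⟨hL.1, by tauto⟩
  by_cases hbb' : b = b'
  · subst hbb'
    exfalso
    by_cases haa' : a = a'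
    · subst haa'
      apply hne
      clear hne hm1 hm2 F1 F2 F3 F4
      ext v
      by_cases hv1 : v = a
      · subst hv1; simp [haS, haS']
      · by_cases hv2 : v = b
        · subst hv2; simp [hbS, hbS']
        · have := E v
          tauto
    · have ha'S : a' ∉ S := by tauto
      have key : S' = insert a' (S.erase a) := by
        have haS'2 : a ∉ S' := by tauto
        clear hne hm1 hm2 F1 F2 F3 F4
        ext v
        simp only [Finset.mem_insert, Finset.mem_erase]
        by_cases hv1 : v = a'
        · subst hv1; simp [haS']
        · by_cases hv2 : v = b
          · subst hv2
            simp only [hv1, false_or]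
            constructor
            · intro h; exact absurd h hbS'
            · rintro ⟨_, h⟩; exact absurd h hbS
          · by_cases hv3 : v = a
            · subst hv3
              simp only [hv1, false_or]
              constructor
              · intro h; exact absurd h haS'2
              · rintro ⟨h, _⟩; exact absurd rfl h
            · have := E v
              tauto
      rcases lt_trichotomy a a' with h | h | h
      · apply hm2
        refine ⟨a', a, key ▸ Finset.mem_insert_self _ _, ?_, h, ?_⟩
        · rw [key, Finset.mem_insert, Finset.mem_erase]
          push_neg
          exact ⟨haa', fun h' => absurd rfl h'⟩
        · have hnotin : a' ∉ S.erase a := fun hmem => ha'S (Finset.mem_of_mem_erase hmem)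
          rw [key, Finset.erase_insert hnotin, Finset.insert_erase haS]
      · exact haa' h
      · exact hm1 ⟨a, a', haS, ha'S, h, key⟩
  · have hb'S : b' ∈ S ∧ b' ≠ a := by
      rcases F1 with h | h
      · exact absurd h.symm hbb'
      · exact ⟨h.2, h.1⟩
    have hbS'2 : b ∈ S' ∧ b ≠ a' := by
      rcases F2 with h | h
      · exact absurd h hbb'
      · exact ⟨h.2, h.1⟩
    by_cases haa' : a = a'
    · subst haa'
      exfalso
      have key : S' = insert b (S.erase b') := by
        clear hne hm1 hm2 F1 F2 F3 F4
        ext v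
        simp only [Finset.mem_insert, Finset.mem_erase]
        by_cases hv1 : v = b
        · subst hv1; simp [hbS'2.1]
        · by_cases hv2 : v = b'
          · subst hv2
            simp only [hv1, false_or]
            constructor
            · intro h; exact absurd h hbS'
            · rintro ⟨h, _⟩; exact absurd rfl h
          · by_cases hv3 : v = a
            · subst hv3
              simp only [hv1, false_or]
              constructor
              · intro _; exact ⟨fun h => hb'S.2 h.symm, haS⟩
              · intro _; exact haS'
            · have := E v
              tauto
      rcases lt_trichotomy b b' with h | h | h
      · exact hm1 ⟨b', b, hb'S.1, hbS, h, key⟩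
      · exact hbb' h
      · apply hm2
        refine ⟨b, b', hbS'2.1, hbS', h, ?_⟩
        have hnotin : b ∉ S.erase b' := fun hmem => hbS (Finset.mem_of_mem_erase hmem)
        rw [key, Finset.erase_insert hnotin, Finset.insert_erase hb'S.1]
    · have ha'S : a' ∉ S := by tauto
      have haS'2 : a ∉ S' := by tauto
      refine ⟨hb'S.1, hbS'2.1, ha'S, haS'2, hbb', haa', F4.1, F3.1, ?_⟩
      clear hne hm1 hm2 F1 F2 F3 F4
      ext v
      simp only [Finset.mem_insert, Finset.mem_erase]
      by_cases hv1 : v = a'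
      · subst hv1; simp [haS']
      · by_cases hv2 : v = b
        · subst hv2; simp [hbS'2.1]
        · by_cases hv3 : v = b'
          · subst hv3
            simp only [hv1, hv2, false_or]
            constructor
            · intro h; exact absurd h hbS'
            · rintro ⟨h, _⟩; exact absurd rfl h
          · by_cases hv4 : v = a
            · subst hv4
              simp only [hv1, hv2, false_or]
              constructor
              · intro h; exact absurd h haS'2
              · rintro ⟨_, h, _⟩; exact absurd rfl h
            · have := E v
              tauto

end Hook

namespace Hook

lemma cnt_swap2 {S S' : Finset ℕ} {x w y z : ℕ}
    (rep : S' = insert z (insert y ((S.erase x).erase w)))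
    (hx : x ∈ S) (hw : w ∈ S) (hxw : x ≠ w) (hy : y ∉ S) (hz : z ∉ S) (hyz : y ≠ z)
    (u v : ℕ) :
    cnt S' u v + (if u < x ∧ x < v then 1 else 0) + (if u < w ∧ w < v then 1 else 0) =
    cnt S u v + (if u < y ∧ y < v then 1 else 0) + (if u < z ∧ z < v then 1 else 0) := by
  have hwE : w ∈ S.erase x := Finset.mem_erase.mpr ⟨fun h => hxw h.symm, hw⟩
  have hyE : y ∉ (S.erase x).erase w := fun h =>
    hy (Finset.mem_of_mem_erase (Finset.mem_of_mem_erase h))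
  have hzE : z ∉ insert y ((S.erase x).erase w) := by
    rw [Finset.mem_insert]
    rintro (h | h)
    · exact hyz h.symm
    · exact hz (Finset.mem_of_mem_erase (Finset.mem_of_mem_erase h))
  have e1 := cnt_erase hx u v
  have e2 := cnt_erase hwE u v
  have e3 := cnt_insert hyE u v
  have e4 : cnt S' u v = cnt (insert y ((S.erase x).erase w)) u v +
      (if u < z ∧ z < v then 1 else 0) := by
    rw [rep]; exact cnt_insert hzE u v
  split_ifs at * <;> omega

set_option maxHeartbeats 1000000 in
lemma heart {S S' : Finset ℕ} {a₁ b₁ a₂ b₂ a₁' b₁' a₂' b₂' : ℕ}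
    (ha₁ : a₁ ∈ S) (hb₁ : b₁ ∉ S) (hlt₁ : b₁ < a₁)
    (ha₂ : a₂ ∈ S) (hb₂ : b₂ ∉ S) (hlt₂ : b₂ < a₂)
    (ha₁' : a₁' ∈ S') (hb₁' : b₁' ∉ S') (hlt₁' : b₁' < a₁')
    (ha₂' : a₂' ∈ S') (hb₂' : b₂' ∉ S') (hlt₂' : b₂' < a₂')
    (e₁ : insert b₁ (S.erase a₁) = insert b₁' (S'.erase a₁'))
    (e₂ : insert b₂ (S.erase a₂) = insert b₂' (S'.erase a₂'))
    (hT : insert b₁ (S.erase a₁) ≠ insert b₂ (S.erase a₂))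
    (hne : S ≠ S')
    (hm1 : ¬ ∃ c d, c ∈ S ∧ d ∉ S ∧ d < c ∧ S' = insert d (S.erase c))
    (hm2 : ¬ ∃ c d, c ∈ S' ∧ d ∉ S' ∧ d < c ∧ S = insert d (S'.erase c)) :
    Odd (cnt S b₁ a₁ + cnt S b₂ a₂ + cnt S' b₁' a₁' + cnt S' b₂' a₂') := by
  obtain ⟨hw1S, hy1S', hz1S, hx1S', hbb1, haa1, hab1, hab1', rep1⟩ :=
    move_structure ha₁ hb₁ hlt₁ ha₁' hb₁' hlt₁' e₁ hne hm1 hm2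
  obtain ⟨hw2S, hy2S', hz2S, hx2S', hbb2, haa2, hab2, hab2', rep2⟩ :=
    move_structure ha₂ hb₂ hlt₂ ha₂' hb₂' hlt₂' e₂ hne hm1 hm2
  have hp1 : b₂ = a₁' ∨ b₂ = b₁ := by
    have h : b₂ ∈ S' := hy2S'
    rw [rep1, Finset.mem_insert, Finset.mem_insert] at h
    rcases h with h | h | h
    · exact Or.inl h
    · exact Or.inr h
    · exact absurd (Finset.mem_of_mem_erase (Finset.mem_of_mem_erase h)) hb₂
  have hp2 : a₂' = a₁' ∨ a₂' = b₁ := by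
    have h : a₂' ∈ S' := ha₂'
    rw [rep1, Finset.mem_insert, Finset.mem_insert] at h
    rcases h with h | h | h
    · exact Or.inl h
    · exact Or.inr h
    · exact absurd (Finset.mem_of_mem_erase (Finset.mem_of_mem_erase h)) hz2S
  have hp3 : a₂ = a₁ ∨ a₂ = b₁' := by
    have h : a₂ ∉ S' := hx2S'
    rw [rep1, Finset.mem_insert, Finset.mem_insert] at h
    push_neg at h
    by_contra hc
    push_neg at hc
    exact h.2.2 (Finset.mem_erase.mpr ⟨hc.2, Finset.mem_erase.mpr ⟨hc.1, ha₂⟩⟩)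
  have hp4 : b₂' = b₁' ∨ b₂' = a₁ := by
    have h : b₂' ∈ S := hw2S
    have h' : b₂' ∉ S' := hb₂'
    rw [rep1, Finset.mem_insert, Finset.mem_insert] at h'
    push_neg at h'
    by_contra hc
    push_neg at hc
    exact h'.2.2 (Finset.mem_erase.mpr ⟨hc.1, Finset.mem_erase.mpr ⟨hc.2, h⟩⟩)
  rcases hp1 with hb2 | hb2
  · -- b₂ = a₁'
    have ha2' : a₂' = b₁ := by
      rcases hp2 with h | h
      · exact absurd (h.trans hb2.symm) hab2'
      · exact h
    rcases hp4 with hb2' | hb2'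
    · -- b₂' = b₁' : case B, a₂ = a₁
      have ha2 : a₂ = a₁ := by
        rcases hp3 with h | h
        · exact h
        · exact absurd (h.trans hb2'.symm) hab2
      -- x := a₁, z := a₁' = b₂, y := b₁ = a₂', w := b₁' = b₂'
      rw [hb2, ha2] at hlt₂
      rw [hb2', ha2'] at hlt₂'
      rw [hb2, ha2, ha2', hb2']
      have key1 := cnt_swap2 rep1 ha₁ hw1S hab1 hb₁ hz1S hab1'.symm b₁' a₁'
      have key2 := cnt_swap2 rep1 ha₁ hw1S hab1 hb₁ hz1S hab1'.symm b₁' b₁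
      rw [Nat.odd_iff]
      rcases lt_trichotomy b₁ a₁' with h | h | h
      · -- w < y < z < x
        have s1 := cnt_split (S := S) hlt₂' h
        have s2 := cnt_split (S := S) h hlt₂
        rw [if_neg hb₁] at s1
        rw [if_neg hz1S] at s2
        split_ifs at key1 key2 <;> omega
      · exact absurd h hab1'.symm
      · -- w < z < y < x
        have s1 := cnt_split (S := S) hlt₁' h
        have s2 := cnt_split (S := S) h hlt₁
        rw [if_neg hz1S] at s1
        rw [if_neg hb₁] at s2
        split_ifs at key1 key2 <;> omega
    · -- b₂' = a₁ : impossible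
      exfalso
      rw [hb2', ha2'] at hlt₂'
      omega
  · -- b₂ = b₁ : case A
    have ha2' : a₂' = a₁' := by
      rcases hp2 with h | h
      · exact h
      · exact absurd (h.trans hb2.symm) hab2'
    have ha2 : a₂ = b₁' := by
      rcases hp3 with h | h
      · exact absurd (by rw [hb2, h]) hT
      · exact h
    have hb2' : b₂' = a₁ := by
      rcases hp4 with h | h
      · exact absurd (h.trans ha2.symm).symm hab2
      · exact h
    -- x := a₁ = b₂', y := b₁ = b₂, w := b₁' = a₂, z := a₁' = a₂'
    rw [hb2, ha2] at hlt₂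
    rw [hb2', ha2'] at hlt₂'
    rw [hb2, ha2, ha2', hb2']
    have key1 := cnt_swap2 rep1 ha₁ hw1S hab1 hb₁ hz1S hab1'.symm b₁' a₁'
    have key2 := cnt_swap2 rep1 ha₁ hw1S hab1 hb₁ hz1S hab1'.symm a₁ a₁'
    rw [Nat.odd_iff]
    rcases lt_trichotomy a₁ b₁' with h | h | h
    · -- y < x < w < z
      have s1 := cnt_split (S := S) hlt₁ h
      have s2 := cnt_split (S := S) h hlt₁'
      rw [if_pos ha₁] at s1
      rw [if_pos hw1S] at s2
      split_ifs at key1 key2 <;> omega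
    · exact absurd h hab1
    · -- y < w < x < z
      have s1 := cnt_split (S := S) hlt₂ h
      have s2 := cnt_split (S := S) h hlt₂'
      rw [if_pos hw1S] at s1
      rw [if_pos ha₁] at s2
      split_ifs at key1 key2 <;> omega

end Hook

namespace Hook

lemma assemble {δ γ : List ℕ} (hδ : IsPartition δ) {x r N : ℕ} (hN : δ.length ≤ N)
    (hx : x ∈ betaSet δ) (hr : 0 < r) (hrx : r ≤ x) (hnx : (x - r) ∉ betaSet δ)
    (hrem : removeHook δ x r = γ) :
    γ.length ≤ N ∧
    (x + (N - δ.length)) ∈ bset N δ ∧ (x - r + (N - δ.length)) ∉ bset N δ ∧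
    (x - r + (N - δ.length)) < (x + (N - δ.length)) ∧
    bset N γ = insert (x - r + (N - δ.length)) ((bset N δ).erase (x + (N - δ.length))) ∧
    legLen (betaSet δ) x r =
      cnt (bset N δ) (x - r + (N - δ.length)) (x + (N - δ.length)) := by
  set n := δ.length with hn
  obtain ⟨hpγ, hlγ, hbγ⟩ := removeHook_spec hδ hx hr hrx hnx
  rw [hrem] at hpγ hlγ hbγ
  have hxm : x ∈ bset n δ := mem_betaSet_iff.mp hx
  have hnxm : (x - r) ∉ bset n δ := fun h => hnx (mem_betaSet_iff.mpr h)
  have hγN : γ.length ≤ N := le_trans hlγ hN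
  have haN : (x + (N - n)) ∈ bset N δ := by
    rw [bset_shift (le_refl n) hN]
    left
    refine ⟨by omega, ?_⟩
    rwa [show x + (N - n) - (N - n) = x by omega]
  have hbN : (x - r + (N - n)) ∉ bset N δ := by
    intro hmem
    rw [bset_shift (le_refl n) hN] at hmem
    rcases hmem with ⟨_, h⟩ | h
    · rw [show x - r + (N - n) - (N - n) = x - r by omega] at h
      exact hnxm h
    · omega
  have hpad := bset_move_pad (le_refl n) hlγ hN hxm hnxm hbγ
  have hleg : legLen (betaSet δ) x r =
      cnt (bset N δ) (x - r + (N - n)) (x + (N - n)) := by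
    rw [legLen_eq_cnt hδ x r, ← cnt_pad (le_refl n) hN (x - r) x]
  exact ⟨hγN, haN, hbN, by omega, hpad, hleg⟩

end Hook

/-- If each `γ_i` is obtained from each `δ_j` by removing a rim hook of leg length
`l i j`, with `γ_1 ≠ γ_2`, `δ_1 ≠ δ_2`, and neither `δ` obtainable from the other by
removing a rim hook, then `(-1)^{l₁₁+l₁₂+l₂₁+l₂₂} = -1`. -/
theorem stmt_14 (γ₁ γ₂ δ₁ δ₂ : List ℕ) (l : Fin 2 → Fin 2 → ℕ)
    (hγ₁ : IsPartition γ₁) (hγ₂ : IsPartition γ₂)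
    (hδ₁ : IsPartition δ₁) (hδ₂ : IsPartition δ₂)
    (h11 : RemHookLeg δ₁ γ₁ (l 0 0)) (h12 : RemHookLeg δ₂ γ₁ (l 0 1))
    (h21 : RemHookLeg δ₁ γ₂ (l 1 0)) (h22 : RemHookLeg δ₂ γ₂ (l 1 1))
    (hγ : γ₁ ≠ γ₂) (hδ : δ₁ ≠ δ₂)
    (h1 : ¬ ∃ m, RemHookLeg δ₁ δ₂ m) (h2 : ¬ ∃ m, RemHookLeg δ₂ δ₁ m) :
    (-1 : ℤ) ^ (l 0 0 + l 0 1 + l 1 0 + l 1 1) = -1 := by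
  classical
  obtain ⟨x11, hx11, r11, hr11, hrx11, hnx11, hrem11, hleg11⟩ := h11
  obtain ⟨x12, hx12, r12, hr12, hrx12, hnx12, hrem12, hleg12⟩ := h12
  obtain ⟨x21, hx21, r21, hr21, hrx21, hnx21, hrem21, hleg21⟩ := h21
  obtain ⟨x22, hx22, r22, hr22, hrx22, hnx22, hrem22, hleg22⟩ := h22
  set N := max δ₁.length δ₂.length with hN
  have hN1 : δ₁.length ≤ N := le_max_left _ _
  have hN2 : δ₂.length ≤ N := le_max_right _ _
  obtain ⟨hγ₁N, ha1, hb1, hlt1, hpad1, hl11⟩ :=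
    Hook.assemble hδ₁ hN1 hx11 hr11 hrx11 hnx11 hrem11
  obtain ⟨_, ha1', hb1', hlt1', hpad1', hl12⟩ :=
    Hook.assemble hδ₂ hN2 hx12 hr12 hrx12 hnx12 hrem12
  obtain ⟨hγ₂N, ha2, hb2, hlt2, hpad2, hl21⟩ :=
    Hook.assemble hδ₁ hN1 hx21 hr21 hrx21 hnx21 hrem21
  obtain ⟨_, ha2', hb2', hlt2', hpad2', hl22⟩ :=
    Hook.assemble hδ₂ hN2 hx22 hr22 hrx22 hnx22 hrem22
  have e₁ := hpad1.symm.trans hpad1'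
  have e₂ := hpad2.symm.trans hpad2'
  have hT : insert (x11 - r11 + (N - δ₁.length)) ((Hook.bset N δ₁).erase
      (x11 + (N - δ₁.length))) ≠ insert (x21 - r21 + (N - δ₁.length))
      ((Hook.bset N δ₁).erase (x21 + (N - δ₁.length))) := by
    rw [← hpad1, ← hpad2]
    exact Hook.bset_ne hγ₁ hγ₂ hγ₁N hγ₂N hγ
  have hne : Hook.bset N δ₁ ≠ Hook.bset N δ₂ := Hook.bset_ne hδ₁ hδ₂ hN1 hN2 hδ
  have hm1 : ¬ ∃ c d, c ∈ Hook.bset N δ₁ ∧ d ∉ Hook.bset N δ₁ ∧ d < c ∧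
      Hook.bset N δ₂ = insert d ((Hook.bset N δ₁).erase c) := by
    rintro ⟨c, d, hc, hd, hdc, heq⟩
    exact h1 (Hook.rem_of_bset hδ₁ hδ₂ hN1 hN2 hc hd hdc heq)
  have hm2 : ¬ ∃ c d, c ∈ Hook.bset N δ₂ ∧ d ∉ Hook.bset N δ₂ ∧ d < c ∧
      Hook.bset N δ₁ = insert d ((Hook.bset N δ₂).erase c) := by
    rintro ⟨c, d, hc, hd, hdc, heq⟩
    exact h2 (Hook.rem_of_bset hδ₂ hδ₁ hN2 hN1 hc hd hdc heq)
  have hodd := Hook.heart ha1 hb1 hlt1 ha2 hb2 hlt2 ha1' hb1' hlt1' ha2' hb2' hlt2'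
    e₁ e₂ hT hne hm1 hm2
  rw [← hl11, ← hl21, ← hl12, ← hl22, hleg11, hleg12, hleg21, hleg22] at hodd
  have : Odd (l 0 0 + l 0 1 + l 1 0 + l 1 1) := by
    rw [Nat.odd_iff] at hodd ⊢
    omega
  exact this.neg_one_pow
end
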